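/- arXiv:1004.3416 — 4 statements merged into one kernel-verified Lean document; each statement's English description precedes it below -/
import Mathlib

section
/- Let {A_v}_{v∈V} be a finite collection of events in a probability space, where the index set V is the vertex set of a chordal graph G. Then Pr(⋃_{v∈V} A_v) ≤ Σ_{I∈𝒞(G)} (−1)^{|I|−1} · Pr(⋂_{i∈I} A_i), where the sum runs over all elements I of the clique complex 𝒞(G). -/
open MeasureTheory Finset
open scoped Classical

/-- A graph is chordal if it contains no induced cycle of length four or greater. -/
def SimpleGraph.IsChordal {V : Type*} (G : SimpleGraph V) : Prop :=
  ∀ n : ℕ, 4 ≤ n → ∀ s : Set V, ¬ Nonempty (G.induce s ≃g SimpleGraph.cycleGraph n)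

/-- The clique complex of `G`: the collection of all non-empty cliques of `G`. -/
noncomputable def SimpleGraph.cliqueComplex {V : Type*} [Fintype V] (G : SimpleGraph V) :
    Finset (Finset V) :=
  Finset.univ.powerset.filter fun I => I.Nonempty ∧ G.IsClique (I : Set V)

/-!
Evaluate both sides pointwise. At an outcome `ω`, let `S` be the set of vertices whose events
occur; the right-hand integrand is then the Euler characteristic of the clique complex of
`G[S]`, i.e. one plus its reduced Euler characteristic `χ̃(S)`. Splitting the cliques at a
vertex `v` gives `χ̃(S) = χ̃(S - v) - χ̃(N)`, where `N` is the neighbourhood of `v` in `S - v`.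
For chordal `G` the components of `G[N]` correspond to the components of `G[S - v]` that `v`
joins together, so the number of components `c` obeys `c(S) + c(N) = c(S - v) + 1`, and
induction gives `χ̃(S) = c(S) - 1`. Hence the integrand is `c(S)`, which is at least the
indicator of the union; integrating gives the inequality.
-/

lemma Finset.card_image_eq_card_image_of_eq_iff {α β γ : Type*} [DecidableEq β] [DecidableEq γ]
    {s : Finset α} {f : α → β} {g : α → γ} (h : ∀ a ∈ s, ∀ b ∈ s, f a = f b ↔ g a = g b) :
    #(s.image f) = #(s.image g) := by
  have hf : s.image f = (s.image fun a => (f a, g a)).image Prod.fst := by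
    rw [image_image]; rfl
  have hg : s.image g = (s.image fun a => (f a, g a)).image Prod.snd := by
    rw [image_image]; rfl
  rw [hf, hg, card_image_of_injOn (f := Prod.fst), card_image_of_injOn (f := Prod.snd)] <;>
  · rintro _ hx _ hy hxy
    obtain ⟨a, ha, rfl⟩ := mem_image.1 hx
    obtain ⟨b, hb, rfl⟩ := mem_image.1 hy
    have := h a ha b hb
    simp_all

lemma MeasureTheory.measureReal_le_sum_of_indicator_le {Ω ι : Type*} [MeasurableSpace Ω]
    {μ : Measure Ω} [IsFiniteMeasure μ] {U : Set Ω} {B : ι → Set Ω} {s : Finset ι} (c : ι → ℝ)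
    (hU : MeasurableSet U) (hB : ∀ i ∈ s, MeasurableSet (B i))
    (h : ∀ ω, U.indicator 1 ω ≤ ∑ i ∈ s, c i * (B i).indicator 1 ω) :
    μ.real U ≤ ∑ i ∈ s, c i * μ.real (B i) := by
  have hint : ∀ i ∈ s, Integrable (fun ω => c i * (B i).indicator (1 : Ω → ℝ) ω) μ :=
    fun i hi => ((integrable_const 1).indicator (hB i hi)).const_mul _
  calc μ.real U = ∫ ω, U.indicator 1 ω ∂μ := (integral_indicator_one hU).symm
    _ ≤ ∫ ω, ∑ i ∈ s, c i * (B i).indicator 1 ω ∂μ :=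
      integral_mono ((integrable_const 1).indicator hU) (integrable_finsetSum _ hint) h
    _ = ∑ i ∈ s, c i * μ.real (B i) := by
      rw [integral_finsetSum _ hint]
      refine sum_congr rfl fun i hi => ?_
      rw [integral_const_mul, integral_indicator_one (hB i hi)]

namespace SimpleGraph

variable {V : Type*} {G : SimpleGraph V}

section Chains

variable {T T' : Finset V} {p q : ℕ → V} {n m : ℕ} {a b c : V}

structure ChainIn (G : SimpleGraph V) (T : Finset V) (p : ℕ → V) (n : ℕ) (a b : V) : Prop where
  start : p 0 = a
  finish : p n = b
  adj : ∀ i < n, G.Adj (p i) (p (i + 1))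
  mem : ∀ i ≤ n, p i ∈ T

namespace ChainIn

lemma refl (ha : a ∈ T) : ChainIn G T (fun _ => a) 0 a a :=
  ⟨rfl, rfl, by simp, fun _ _ => ha⟩

lemma of_adj (h : G.Adj a b) (ha : a ∈ T) (hb : b ∈ T) :
    ChainIn G T (fun i => if i = 0 then a else b) 1 a b where
  start := rfl
  finish := rfl
  adj i hi := by
    obtain rfl : i = 0 := by omega
    simpa using h
  mem i _ := by split_ifs <;> assumption

lemma mono (h : ChainIn G T p n a b) (hT : T ⊆ T') : ChainIn G T' p n a b :=
  ⟨h.start, h.finish, h.adj, fun i hi => hT (h.mem i hi)⟩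

lemma reverse (h : ChainIn G T p n a b) : ChainIn G T (fun i => p (n - i)) n b a where
  start := by simpa using h.finish
  finish := by simpa using h.start
  adj i hi := by
    have := (h.adj (n - (i + 1)) (by omega)).symm
    rwa [show n - (i + 1) + 1 = n - i by omega] at this
  mem i _ := h.mem _ (by omega)

lemma take (h : ChainIn G T p n a b) {k : ℕ} (hk : k ≤ n) : ChainIn G T p k a (p k) :=
  ⟨h.start, rfl, fun i hi => h.adj i (by omega), fun i hi => h.mem i (by omega)⟩

lemma drop (h : ChainIn G T p n a b) {k : ℕ} (hk : k ≤ n) :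
    ChainIn G T (fun i => p (i + k)) (n - k) (p k) b where
  start := by simp
  finish := by simpa [Nat.sub_add_cancel hk] using h.finish
  adj i hi := by simpa [Nat.add_right_comm] using h.adj (i + k) (by omega)
  mem i hi := h.mem _ (by omega)

lemma append (h : ChainIn G T p n a b) (h' : ChainIn G T q m b c) :
    ChainIn G T (fun i => if i ≤ n then p i else q (i - n)) (n + m) a c where
  start := by simpa using h.start
  finish := by
    rcases Nat.eq_zero_or_pos m with rfl | hm
    · simpa [h.finish] using h'.start.symm.trans h'.finish
    · simpa [show ¬ n + m ≤ n by omega] using h'.finish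
  adj i hi := by
    rcases lt_trichotomy i n with hin | rfl | hin
    · simpa [hin.le, Nat.succ_le_of_lt hin] using h.adj i hin
    · simpa [h.finish, ← h'.start] using h'.adj 0 (by omega)
    · simpa [show ¬ i ≤ n by omega, show ¬ i + 1 ≤ n by omega, Nat.sub_add_comm hin.le]
        using h'.adj (i - n) (by omega)
  mem i hi := by
    split_ifs with hin
    · exact h.mem i hin
    · exact h'.mem _ (by omega)

lemma shorten_of_eq (h : ChainIn G T p n a b) {i j : ℕ} (hij : i < j) (hj : j ≤ n)
    (he : p i = p j) : ∃ q, ChainIn G T q (i + (n - j)) a b :=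
  ⟨_, (h.take (hij.le.trans hj)).append (he ▸ h.drop hj)⟩

lemma shorten_of_adj (h : ChainIn G T p n a b) {i j : ℕ} (hij : i < j) (hj : j ≤ n)
    (hadj : G.Adj (p i) (p j)) : ∃ q, ChainIn G T q (i + 1 + (n - j)) a b :=
  ⟨_, ((h.take (hij.le.trans hj)).append
    (of_adj hadj (h.mem i (by omega)) (h.mem j hj))).append (h.drop hj)⟩

end ChainIn

def ReachableIn (G : SimpleGraph V) (T : Finset V) (a b : V) : Prop :=
  ∃ n p, ChainIn G T p n a b

namespace ReachableIn

lemma refl (ha : a ∈ T) : ReachableIn G T a a := ⟨0, _, .refl ha⟩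

lemma of_adj (h : G.Adj a b) (ha : a ∈ T) (hb : b ∈ T) : ReachableIn G T a b :=
  ⟨1, _, .of_adj h ha hb⟩

lemma symm (h : ReachableIn G T a b) : ReachableIn G T b a :=
  let ⟨n, _, hp⟩ := h; ⟨n, _, hp.reverse⟩

lemma trans (h : ReachableIn G T a b) (h' : ReachableIn G T b c) : ReachableIn G T a c :=
  let ⟨n, _, hp⟩ := h; let ⟨m, _, hq⟩ := h'; ⟨n + m, _, hp.append hq⟩

lemma mono (h : ReachableIn G T a b) (hT : T ⊆ T') : ReachableIn G T' a b :=
  let ⟨n, p, hp⟩ := h; ⟨n, p, hp.mono hT⟩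

lemma mem_right (h : ReachableIn G T a b) : b ∈ T :=
  let ⟨_, _, hp⟩ := h; hp.finish ▸ hp.mem _ le_rfl

end ReachableIn

end Chains

lemma cycleGraph_adj_iff_val {n : ℕ} {k l : Fin (n + 2)} :
    (cycleGraph (n + 2)).Adj k l ↔ k.val + 1 = l.val ∨ l.val + 1 = k.val ∨
      (k.val = 0 ∧ l.val = n + 1) ∨ (l.val = 0 ∧ k.val = n + 1) := by
  rw [cycleGraph_adj, sub_eq_iff_eq_add, sub_eq_iff_eq_add, Fin.ext_iff, Fin.ext_iff,
    add_comm (1 : Fin (n + 2)), add_comm (1 : Fin (n + 2)), Fin.val_add_one, Fin.val_add_one]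
  have hk := k.isLt
  have hl := l.isLt
  split_ifs with h₁ h₂ h₂ <;> simp only [Fin.ext_iff, Fin.val_last] at h₁ h₂ <;> omega

lemma IsChordal.lt_four_of_embedding (hG : G.IsChordal) {n : ℕ} (f : cycleGraph n ↪g G) :
    n < 4 := by
  by_contra h
  exact hG n (by omega) _ ⟨f.isoInduceRange.symm⟩

lemma IsChordal.lt_two_of_induced_path_apex (hG : G.IsChordal) {p : ℕ → V} {n : ℕ} {v : V}
    (hinj : ∀ i ≤ n, ∀ j ≤ n, p i = p j → i = j) (hv : ∀ i ≤ n, p i ≠ v)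
    (hpath : ∀ i ≤ n, ∀ j ≤ n, G.Adj (p i) (p j) ↔ i + 1 = j ∨ j + 1 = i)
    (hapex : ∀ i ≤ n, G.Adj (p i) v ↔ i = 0 ∨ i = n) : n < 2 := by
  -- `p 0, …, p n, v` read as a cycle of length `n + 2`
  let q : ℕ → V := fun k => if k ≤ n then p k else v
  let f : cycleGraph (n + 2) ↪g G :=
    { toFun := fun k => q k
      inj' := fun k l hkl => by
        have := k.isLt
        have := l.isLt
        simp only [q] at hkl
        split_ifs at hkl with hk hl hl
        · exact Fin.ext (hinj _ hk _ hl hkl)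
        · exact absurd hkl (hv _ hk)
        · exact absurd hkl.symm (hv _ hl)
        · exact Fin.ext (by omega)
      map_rel_iff' := fun {k l} => by
        have := k.isLt
        have := l.isLt
        change G.Adj (q k) (q l) ↔ _
        simp only [q, cycleGraph_adj_iff_val]
        split_ifs with hk hl hl
        · rw [hpath _ hk _ hl]; omega
        · rw [hapex _ hk]; omega
        · rw [adj_comm, hapex _ hl]; omega
        · simp only [SimpleGraph.irrefl, false_iff]; omega }
  have := hG.lt_four_of_embedding f
  omega

section ShortestChains

variable {T : Finset V} {p : ℕ → V} {n : ℕ} {a b : V}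

lemma ChainIn.injective_of_minimal (h : ChainIn G T p n a b)
    (hmin : ∀ m < n, ∀ q, ¬ ChainIn G T q m a b) :
    ∀ i ≤ n, ∀ j ≤ n, p i = p j → i = j := by
  have key : ∀ i j, i < j → j ≤ n → p i ≠ p j := fun i j hij hj he =>
    let ⟨q, hq⟩ := h.shorten_of_eq hij hj he
    hmin _ (by omega) q hq
  intro i hi j hj he
  rcases lt_trichotomy i j with hij | rfl | hij
  · exact absurd he (key i j hij hj)
  · rfl
  · exact absurd he.symm (key j i hij hi)

lemma ChainIn.adj_iff_of_minimal (h : ChainIn G T p n a b)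
    (hmin : ∀ m < n, ∀ q, ¬ ChainIn G T q m a b) :
    ∀ i ≤ n, ∀ j ≤ n, G.Adj (p i) (p j) ↔ i + 1 = j ∨ j + 1 = i := by
  have key : ∀ i j, i + 1 < j → j ≤ n → ¬ G.Adj (p i) (p j) := fun i j hij hj hadj =>
    let ⟨q, hq⟩ := h.shorten_of_adj (by omega) hj hadj
    hmin _ (by omega) q hq
  intro i hi j hj
  constructor
  · intro hadj
    rcases lt_trichotomy i j with hij | rfl | hij
    · by_contra hne
      exact key i j (by omega) hj hadj
    · exact absurd hadj (G.irrefl)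
    · by_contra hne
      exact key j i (by omega) hi hadj.symm
  · rintro (rfl | rfl)
    · exact h.adj i (by omega)
    · exact (h.adj j (by omega)).symm

/-- A shortest connecting path that leaves the neighbourhood of `v` would close up with `v` into
an induced cycle of length at least four. -/
lemma IsChordal.reachableIn_filter_adj (hG : G.IsChordal) {v : V} (hv : v ∉ T)
    (ha : G.Adj v a) (hb : G.Adj v b) (h : ReachableIn G T a b) :
    ReachableIn G (T.filter (G.Adj v)) a b := by
  obtain ⟨n, p, hp⟩ := h
  induction n using Nat.strong_induction_on generalizing a b p with
  | _ n ih =>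
  by_cases hshorter : ∃ m < n, ∃ q, ChainIn G T q m a b
  · obtain ⟨m, hm, q, hq⟩ := hshorter
    exact ih m hm ha hb q hq
  push Not at hshorter
  by_cases hmid : ∃ k, 0 < k ∧ k < n ∧ G.Adj v (p k)
  · obtain ⟨k, hk0, hkn, hvk⟩ := hmid
    exact (ih k hkn ha hvk p (hp.take hkn.le)).trans
      (ih (n - k) (by omega) hvk hb _ (hp.drop hkn.le))
  push Not at hmid
  have hapex : ∀ i ≤ n, G.Adj (p i) v ↔ i = 0 ∨ i = n := by
    intro i hi
    constructor
    · intro hadj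
      by_contra hne
      exact hmid i (by omega) (by omega) hadj.symm
    · rintro (rfl | rfl)
      · exact hp.start ▸ ha.symm
      · exact hp.finish ▸ hb.symm
  have hn : n < 2 := hG.lt_two_of_induced_path_apex (hp.injective_of_minimal hshorter)
    (fun i hi he => hv (he ▸ hp.mem i hi :)) (hp.adj_iff_of_minimal hshorter) hapex
  have haN : a ∈ T.filter (G.Adj v) := mem_filter.2 ⟨hp.start ▸ hp.mem 0 (by omega), ha⟩
  have hbN : b ∈ T.filter (G.Adj v) := mem_filter.2 ⟨hp.finish ▸ hp.mem n le_rfl, hb⟩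
  interval_cases n
  · exact hp.start.symm.trans hp.finish ▸ .refl haN
  · exact .of_adj (hp.start ▸ hp.finish ▸ hp.adj 0 one_pos) haN hbN

end ShortestChains

section Components

variable {S T : Finset V} {a b v : V}

lemma ReachableIn.erase_or (h : ReachableIn G S a b) :
    ReachableIn G (S.erase v) a b ∨ ReachableIn G S a v := by
  obtain ⟨n, p, hp⟩ := h
  by_cases hv : ∃ i ≤ n, p i = v
  · obtain ⟨i, hi, rfl⟩ := hv
    exact .inr ⟨i, p, hp.take hi⟩
  · push Not at hv
    exact .inl ⟨n, p, hp.start, hp.finish, hp.adj, fun i hi => mem_erase.2 ⟨hv i hi, hp.mem i hi⟩⟩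

lemma ReachableIn.exists_adj_reachableIn_erase (h : ReachableIn G S a v) (hav : a ≠ v) :
    ∃ u, G.Adj v u ∧ ReachableIn G (S.erase v) a u := by
  obtain ⟨n, p, hp⟩ := h
  have hhit : ∃ k, p k = v := ⟨n, hp.finish⟩
  set k := Nat.find hhit
  have hk : 0 < k := Nat.pos_of_ne_zero fun hk => hav (hp.start ▸ hk ▸ Nat.find_spec hhit)
  have hkn : k ≤ n := Nat.find_min' hhit hp.finish
  have hadj := hp.adj (k - 1) (by omega)
  rw [Nat.sub_add_cancel hk, Nat.find_spec hhit] at hadj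
  refine ⟨p (k - 1), hadj.symm, k - 1, p, hp.start, rfl, fun i hi => hp.adj i (by omega),
    fun i hi => mem_erase.2 ⟨Nat.find_min hhit (by omega), hp.mem i (by omega)⟩⟩

noncomputable def componentIn (G : SimpleGraph V) (S : Finset V) (a : V) : Finset V :=
  S.filter (ReachableIn G S a)

noncomputable def numComponentsIn (G : SimpleGraph V) (S : Finset V) : ℕ :=
  #(S.image (componentIn G S))

lemma mem_componentIn : b ∈ componentIn G S a ↔ ReachableIn G S a b := by
  simpa [componentIn] using fun h => h.mem_right

lemma componentIn_eq_componentIn_iff (ha : a ∈ S) :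
    componentIn G S a = componentIn G S b ↔ ReachableIn G S a b := by
  constructor
  · intro h
    have : a ∈ componentIn G S b := h ▸ mem_componentIn.2 (.refl ha)
    exact (mem_componentIn.1 this).symm
  · intro h
    ext x
    simp only [mem_componentIn]
    exact ⟨h.symm.trans, h.trans⟩

lemma notMem_componentIn_erase : v ∉ componentIn G (S.erase v) a := fun h =>
  notMem_erase v S (mem_componentIn.1 h).mem_right

lemma numComponentsIn_pos (hS : S.Nonempty) : 0 < numComponentsIn G S :=
  card_pos.2 (hS.image _)

lemma componentIn_erase_of_not_reachableIn (h : ¬ ReachableIn G S a v) :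
    componentIn G (S.erase v) a = componentIn G S a := by
  ext b
  simp only [mem_componentIn]
  exact ⟨fun hb => hb.mono (erase_subset v S), fun hb => hb.erase_or.resolve_right h⟩

lemma image_componentIn_eq_insert (hv : v ∈ S) :
    S.image (componentIn G S) = insert (componentIn G S v)
      (((S.erase v).filter (¬ ReachableIn G S · v)).image (componentIn G (S.erase v))) := by
  ext Q
  simp only [mem_image, mem_insert, mem_filter]
  constructor
  · rintro ⟨a, ha, rfl⟩
    by_cases hav : ReachableIn G S a v
    · exact .inl ((componentIn_eq_componentIn_iff ha).2 hav)
    · refine .inr ⟨a, ⟨mem_erase.2 ⟨?_, ha⟩, hav⟩, componentIn_erase_of_not_reachableIn hav⟩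
      rintro rfl
      exact hav (.refl ha)
  · rintro (rfl | ⟨a, ⟨ha, hav⟩, rfl⟩)
    · exact ⟨v, hv, rfl⟩
    · exact ⟨a, mem_of_mem_erase ha, (componentIn_erase_of_not_reachableIn hav).symm⟩

lemma numComponentsIn_eq_card_add_one (hv : v ∈ S) :
    numComponentsIn G S =
      #(((S.erase v).filter (¬ ReachableIn G S · v)).image (componentIn G (S.erase v))) + 1 := by
  rw [numComponentsIn, image_componentIn_eq_insert hv, card_insert_of_notMem]
  intro h
  obtain ⟨a, -, ha⟩ := mem_image.1 h
  exact notMem_componentIn_erase (ha ▸ mem_componentIn.2 (.refl hv))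

lemma image_filter_reachableIn_eq_image_filter_adj (hv : v ∈ S) :
    ((S.erase v).filter (ReachableIn G S · v)).image (componentIn G (S.erase v)) =
      ((S.erase v).filter (G.Adj v)).image (componentIn G (S.erase v)) := by
  ext Q
  simp only [mem_image, mem_filter]
  constructor
  · rintro ⟨a, ⟨ha, hav⟩, rfl⟩
    obtain ⟨u, hvu, hau⟩ := hav.exists_adj_reachableIn_erase (ne_of_mem_erase ha)
    exact ⟨u, ⟨hau.mem_right, hvu⟩, ((componentIn_eq_componentIn_iff ha).2 hau).symm⟩
  · rintro ⟨u, ⟨hu, hvu⟩, rfl⟩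
    exact ⟨u, ⟨hu, .of_adj hvu.symm (mem_of_mem_erase hu) hv⟩, rfl⟩

lemma numComponentsIn_erase (hv : v ∈ S) :
    numComponentsIn G (S.erase v) =
      #(((S.erase v).filter (G.Adj v)).image (componentIn G (S.erase v))) +
      #(((S.erase v).filter (¬ ReachableIn G S · v)).image (componentIn G (S.erase v))) := by
  have hsplit : (S.erase v).image (componentIn G (S.erase v)) =
      ((S.erase v).filter (ReachableIn G S · v)).image (componentIn G (S.erase v)) ∪
      ((S.erase v).filter (¬ ReachableIn G S · v)).image (componentIn G (S.erase v)) := by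
    rw [← image_union, filter_union_filter_not_eq]
  rw [numComponentsIn, hsplit, card_union_of_disjoint,
    image_filter_reachableIn_eq_image_filter_adj hv]
  rw [Finset.disjoint_left]
  intro Q hQa hQb
  obtain ⟨a, ha, rfl⟩ := mem_image.1 hQa
  obtain ⟨b, hb, hba⟩ := mem_image.1 hQb
  rw [mem_filter] at ha hb
  exact hb.2 ((((componentIn_eq_componentIn_iff hb.1).1 hba).mono (erase_subset v S)).trans ha.2)

lemma IsChordal.card_image_componentIn_filter_adj (hG : G.IsChordal) (hv : v ∉ T) :
    #((T.filter (G.Adj v)).image (componentIn G T)) = numComponentsIn G (T.filter (G.Adj v)) :=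
  card_image_eq_card_image_of_eq_iff fun a ha b hb => by
    rw [componentIn_eq_componentIn_iff (mem_of_mem_filter a ha),
      componentIn_eq_componentIn_iff ha]
    exact ⟨hG.reachableIn_filter_adj hv (mem_filter.1 ha).2 (mem_filter.1 hb).2,
      fun h => h.mono (filter_subset _ _)⟩

lemma IsChordal.numComponentsIn_add_numComponentsIn_filter_adj (hG : G.IsChordal) (hv : v ∈ S) :
    numComponentsIn G S + numComponentsIn G ((S.erase v).filter (G.Adj v)) =
      numComponentsIn G (S.erase v) + 1 := by
  rw [numComponentsIn_eq_card_add_one hv, numComponentsIn_erase hv,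
    hG.card_image_componentIn_filter_adj (notMem_erase v S)]
  ring

/-- The empty clique counts as the face of dimension `-1`; the exponent `#K + 1` has the parity
of the dimension `#K - 1` without truncated subtraction. -/
noncomputable def cliqueReducedEulerChar (G : SimpleGraph V) (S : Finset V) : ℤ :=
  ∑ K ∈ S.powerset.filter (fun I : Finset V => G.IsClique (I : Set V)), (-1) ^ (#K + 1)

lemma cliqueReducedEulerChar_insert (hv : v ∉ T) :
    cliqueReducedEulerChar G (insert v T) =
      cliqueReducedEulerChar G T - cliqueReducedEulerChar G (T.filter (G.Adj v)) := by
  simp only [cliqueReducedEulerChar, sum_filter]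
  rw [sum_powerset_insert hv, sub_eq_add_neg, ← sum_neg_distrib]
  congr 1
  refine (sum_subset (powerset_mono.2 (filter_subset _ _)) ?_).symm.trans (sum_congr rfl ?_)
  · intro K hKT hKN
    obtain ⟨x, hxK, hx⟩ := not_subset.1 (mt mem_powerset.2 hKN)
    have hxT := mem_powerset.1 hKT hxK
    refine if_neg fun h => hx (mem_filter.2 ⟨hxT, ?_⟩)
    rw [coe_insert, isClique_insert] at h
    exact h.2 x hxK (ne_of_mem_of_not_mem hxT hv).symm
  · intro K hK
    have hKT := (mem_powerset.1 hK).trans (filter_subset _ T)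
    have hvK : v ∉ K := fun h => hv (hKT h)
    have hclique : G.IsClique (↑(insert v K) : Set V) ↔ G.IsClique (K : Set V) := by
      rw [coe_insert, isClique_insert_of_notMem (by simpa using hvK)]
      exact and_iff_left fun b hb => (mem_filter.1 (mem_powerset.1 hK hb)).2
    simp only [hclique, card_insert_of_notMem hvK, pow_succ]
    split_ifs <;> ring

lemma cliqueReducedEulerChar_empty : cliqueReducedEulerChar G ∅ = -1 := by
  rw [cliqueReducedEulerChar, powerset_empty, filter_singleton, if_pos (by simp)]
  simp

theorem IsChordal.cliqueReducedEulerChar_eq (hG : G.IsChordal) (S : Finset V) :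
    cliqueReducedEulerChar G S = numComponentsIn G S - 1 := by
  induction S using Finset.strongInduction with
  | H S ih =>
  rcases S.eq_empty_or_nonempty with rfl | ⟨v, hv⟩
  · simp [cliqueReducedEulerChar_empty, numComponentsIn]
  have hT : S.erase v ⊂ S := erase_ssubset hv
  have hN : (S.erase v).filter (G.Adj v) ⊂ S := (filter_subset _ _).trans_ssubset hT
  have hcount := hG.numComponentsIn_add_numComponentsIn_filter_adj hv
  rw [← insert_erase hv, cliqueReducedEulerChar_insert (notMem_erase v S), ih _ hT, ih _ hN,
    insert_erase hv]
  omega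

end Components

lemma sum_cliqueComplex_filter_subset [Fintype V] (S : Finset V) :
    ∑ I ∈ G.cliqueComplex with I ⊆ S, (-1 : ℤ) ^ (#I - 1) = cliqueReducedEulerChar G S + 1 := by
  have hfaces : G.cliqueComplex.filter (· ⊆ S) =
      (S.powerset.filter fun I : Finset V => G.IsClique (I : Set V)).erase ∅ := by
    ext I
    simp only [cliqueComplex, mem_filter, mem_erase, mem_powerset, subset_univ, true_and,
      nonempty_iff_ne_empty]
    tauto
  have hempty : ∅ ∈ S.powerset.filter fun I : Finset V => G.IsClique (I : Set V) := by simp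
  rw [hfaces, cliqueReducedEulerChar, ← sum_erase_add _ _ hempty]
  simp only [card_empty, zero_add, pow_one, neg_add_cancel_right]
  refine sum_congr rfl fun I hI => ?_
  obtain ⟨m, hm⟩ := Nat.exists_eq_add_one_of_ne_zero (card_ne_zero.2
    (nonempty_iff_ne_empty.2 (ne_of_mem_erase hI)))
  rw [hm, pow_succ, pow_succ]
  simp

theorem IsChordal.sum_cliqueComplex_filter_subset_eq [Fintype V] (hG : G.IsChordal)
    (S : Finset V) :
    ∑ I ∈ G.cliqueComplex with I ⊆ S, (-1 : ℤ) ^ (#I - 1) = numComponentsIn G S := by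
  rw [sum_cliqueComplex_filter_subset, hG.cliqueReducedEulerChar_eq]
  ring

end SimpleGraph

open SimpleGraph in
theorem chordal_graph_sieve_upper {Ω V : Type*} [MeasurableSpace Ω] [Fintype V]
    (μ : Measure Ω) [IsProbabilityMeasure μ] (G : SimpleGraph V) (hG : G.IsChordal)
    (A : V → Set Ω) (hA : ∀ v, MeasurableSet (A v)) :
    (μ (⋃ v, A v)).toReal ≤
      ∑ I ∈ G.cliqueComplex, (-1 : ℝ) ^ (I.card - 1) * (μ (⋂ i ∈ I, A i)).toReal := by
  refine measureReal_le_sum_of_indicator_le _ (MeasurableSet.iUnion hA)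
    (fun I _ => I.measurableSet_biInter fun i _ => hA i) fun ω => ?_
  set S := univ.filter (ω ∈ A ·)
  have hunion : (⋃ v, A v).indicator (1 : Ω → ℝ) ω = if S.Nonempty then 1 else 0 := by
    simp [Set.indicator_apply, S, Finset.Nonempty]
  have hinter : ∀ I : Finset V, (⋂ i ∈ I, A i).indicator (1 : Ω → ℝ) ω = if I ⊆ S then 1 else 0 :=
    fun I => by simp [Set.indicator_apply, S, subset_iff]
  have hsum := congrArg (Int.cast : ℤ → ℝ) (hG.sum_cliqueComplex_filter_subset_eq S)
  push_cast at hsum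
  simp only [hunion, hinter, mul_ite, mul_one, mul_zero, ← sum_filter, hsum]
  split_ifs with hS
  · exact_mod_cast numComponentsIn_pos hS
  · positivity
end

section
/- Let {A_v}_{v∈V} be a finite collection of events in a probability space, where the index set V is the vertex set of a chordal graph G. Then for every positive integer r, Pr(⋃_{v∈V} A_v) ≤ Σ_{I∈𝒞(G), |I|≤2r−1} (−1)^{|I|−1} · Pr(⋂_{i∈I} A_i), where the sum runs over all elements I of the clique complex 𝒞(G) of cardinality at most 2r−1. -/
open MeasureTheory Finset
open scoped Classical

/-- The independence number of `G`: the maximum size of a set of pairwise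
non-adjacent vertices. -/
noncomputable def SimpleGraph.indepNum' {V : Type*} [Fintype V] (G : SimpleGraph V) : ℕ :=
  sSup {n | ∃ s : Finset V, ((s : Set V).Pairwise fun v w => ¬ G.Adj v w) ∧ s.card = n}


/-!
The right-hand side is the integral over `ω` of the sum of `(-1)^(|I| - 1)` over the nonempty
cliques `I ⊆ T = {v | ω ∈ A v}` with `|I| ≤ 2r - 1`: the Euler characteristic of the clique
complex of `G[T]`, truncated at dimension `2r - 2`. So it suffices that this truncated Euler
characteristic is at least `1` for every nonempty `T`.

`G[T]` is chordal, so it has a simplicial vertex `v` (Dirac). Splitting the cliques according to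
whether they contain `v` gives the same sum for `T - v` plus `∑ (-1)^|J|` over the subsets `J` of
the clique `N(v) ∩ T` with `|J| ≤ 2r - 2`; the latter equals `C(|N(v) ∩ T| - 1, 2r - 2) ≥ 0`
(or `1` if `N(v) ∩ T = ∅`) because the truncation is at an even size. Induction on `|T|` finishes.

Dirac's lemma rests on minimal separators of chordal graphs being cliques: two non-adjacent
vertices `x, y` of a minimal `a`-`b` separator are joined by shortest paths through the
components of `a` and of `b`, and these two paths form an induced cycle of length at least `4`.
-/

namespace SimpleGraph

variable {V : Type*} {G : SimpleGraph V} {u v w : V}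

namespace Walk

def IsInducedPath (p : G.Walk u v) : Prop :=
  ∀ i j, i < j → j ≤ p.length →
    p.getVert i ≠ p.getVert j ∧ (G.Adj (p.getVert i) (p.getVert j) → j = i + 1)

def IsShortestIn (s : Set V) (p : G.Walk u v) : Prop :=
  (∀ z ∈ p.support, z ∈ s) ∧ ∀ q : G.Walk u v, (∀ z ∈ q.support, z ∈ s) → p.length ≤ q.length

lemma exists_isShortestIn {s : Set V} (p : G.Walk u v) (hp : ∀ z ∈ p.support, z ∈ s) :
    ∃ q : G.Walk u v, q.IsShortestIn s := by
  have hex : ∃ n, ∃ q : G.Walk u v, (∀ z ∈ q.support, z ∈ s) ∧ q.length = n := ⟨_, p, hp, rfl⟩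
  obtain ⟨q, hq, hlen⟩ := Nat.find_spec hex
  exact ⟨q, hq, fun q' hq' => hlen ▸ Nat.find_le ⟨q', hq', rfl⟩⟩

lemma IsShortestIn.length_le_of_shortcut {s : Set V} {p : G.Walk u v} (hp : p.IsShortestIn s)
    {i j : ℕ} (w : G.Walk (p.getVert i) (p.getVert j)) (hw : ∀ z ∈ w.support, z ∈ s) :
    p.length ≤ i + w.length + (p.length - j) := by
  have hsub : ∀ z ∈ ((p.take i).append (w.append (p.drop j))).support, z ∈ s := by
    intro z hz
    simp only [mem_support_append_iff, support_take, drop_support_eq_support_drop_min] at hz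
    rcases hz with hz | hz | hz
    · exact hp.1 z (List.mem_of_mem_take hz)
    · exact hw z hz
    · exact hp.1 z (List.mem_of_mem_drop hz)
  have := hp.2 _ hsub
  simp only [length_append, take_length, drop_length] at this
  omega

lemma IsShortestIn.isInducedPath {s : Set V} {p : G.Walk u v} (hp : p.IsShortestIn s) :
    p.IsInducedPath := by
  intro i j hij hj
  have hmem : p.getVert i ∈ s := hp.1 _ (p.getVert_mem_support i)
  refine ⟨fun h => ?_, fun h => ?_⟩
  · have := hp.length_le_of_shortcut (nil.copy rfl h) (by simpa using hmem)
    simp only [length_copy, length_nil] at this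
    omega
  · have := hp.length_le_of_shortcut (h.toWalk) (by
      simp only [Adj.toWalk, support_cons, support_nil, List.mem_cons, List.not_mem_nil]
      rintro z (rfl | rfl | h)
      exacts [hmem, hp.1 _ (p.getVert_mem_support j), h.elim])
    simp only [Adj.toWalk, length_cons, length_nil] at this
    omega

lemma two_le_length_of_not_adj (p : G.Walk u v) (huv : u ≠ v) (h : ¬ G.Adj u v) :
    2 ≤ p.length := by
  by_contra! hp
  interval_cases hlen : p.length
  · exact huv (eq_of_length_eq_zero hlen)
  · exact h (adj_of_length_eq_one hlen)

lemma IsShortestIn.getVert_mem {s : Set V} {p : G.Walk u v}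
    (hp : p.IsShortestIn (insert u (insert v s))) {i : ℕ} (hi : 0 < i) (hi' : i < p.length) :
    p.getVert i ∈ s := by
  have hmem := hp.1 _ (p.getVert_mem_support i)
  have hu := (hp.isInducedPath 0 i hi hi'.le).1
  have hv := (hp.isInducedPath i p.length hi' le_rfl).1
  simp only [getVert_zero, getVert_length] at hu hv
  rcases hmem with h | h | h
  exacts [(hu h.symm).elim, (hv h).elim, h]

end Walk

lemma cycleGraph_adj_of_lt {n : ℕ} {i j : Fin n} (hij : i < j) :
    (cycleGraph n).Adj i j ↔ j.val = i.val + 1 ∨ (i.val = 0 ∧ j.val = n - 1) := by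
  have hij' : i.val < j.val := hij
  rw [cycleGraph_adj', Fin.coe_sub_iff_lt.mpr hij, Fin.coe_sub_iff_le.mpr hij.le]
  have := j.isLt
  omega

open Walk in
lemma IsChordal.false_of_closedWalk (hG : G.IsChordal) (c : G.Walk u u) (hc : 4 ≤ c.length)
    (hind : ∀ i j, i < j → j < c.length → c.getVert i ≠ c.getVert j ∧
      (G.Adj (c.getVert i) (c.getVert j) → j = i + 1 ∨ (i = 0 ∧ j = c.length - 1))) :
    False := by
  set f : Fin c.length → V := fun i => c.getVert i
  have hadj_of_lt : ∀ i j : Fin c.length, i < j →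
      (G.Adj (f i) (f j) ↔ (cycleGraph c.length).Adj i j) := by
    intro i j hij
    rw [cycleGraph_adj_of_lt hij]
    refine ⟨(hind i j hij j.isLt).2, ?_⟩
    rintro (h | ⟨hi, hj⟩)
    · simpa [f, h] using c.adj_getVert_succ (i.isLt)
    · have := c.adj_getVert_succ (i := c.length - 1) (by omega)
      rw [Nat.sub_add_cancel (by omega), getVert_length] at this
      simpa [f, hi, hj] using this.symm
  have hinj : Function.Injective f := by
    intro i j h
    by_contra hne
    rcases lt_or_gt_of_ne hne with hij | hji
    · exact (hind i j hij j.isLt).1 h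
    · exact (hind j i hji i.isLt).1 h.symm
  have hadj : ∀ i j, G.Adj (f i) (f j) ↔ (cycleGraph c.length).Adj i j := by
    intro i j
    rcases lt_trichotomy i j with hij | rfl | hji
    · exact hadj_of_lt i j hij
    · simp
    · rw [G.adj_comm, (cycleGraph _).adj_comm]
      exact hadj_of_lt j i hji
  exact hG _ hc (Set.range f)
    ⟨{ toEquiv := (Equiv.ofInjective f hinj).symm
       map_rel_iff' := fun {a b} => by
        obtain ⟨i, rfl⟩ := (Equiv.ofInjective f hinj).surjective a
        obtain ⟨j, rfl⟩ := (Equiv.ofInjective f hinj).surjective b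
        simp [hadj] }⟩

open Walk in
lemma IsChordal.false_of_isInducedPath_append (hG : G.IsChordal) (p : G.Walk u v) (q : G.Walk v u)
    (hp : p.IsInducedPath) (hq : q.IsInducedPath) (hp2 : 2 ≤ p.length) (hq2 : 2 ≤ q.length)
    (hpq : ∀ i j, i < p.length → 0 < j → j < q.length → p.getVert i ≠ q.getVert j ∧
      (G.Adj (p.getVert i) (q.getVert j) → i = 0 ∧ j = q.length - 1)) : False := by
  refine hG.false_of_closedWalk (p.append q) (by rw [length_append]; omega) fun i j hij hj => ?_
  rw [length_append] at hj ⊢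
  rcases le_or_gt j p.length with hjp | hpj
  · rw [getVert_append', if_pos (hij.le.trans hjp), getVert_append', if_pos hjp]
    exact (hp i j hij hjp).imp_right fun h hadj => .inl (h hadj)
  rcases le_or_gt p.length i with hpi | hip
  · rw [getVert_append, if_neg hpi.not_gt, getVert_append, if_neg (hpi.trans hij.le).not_gt]
    refine (hq _ _ (by omega) (by omega)).imp_right fun h hadj => .inl ?_
    have := h hadj
    omega
  · rw [getVert_append, if_pos hip, getVert_append, if_neg hpj.not_gt]
    refine (hpq i _ hip (by omega) (by omega)).imp_right fun h hadj => .inr ?_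
    have := h hadj
    omega

def ReachIn (G : SimpleGraph V) (s : Set V) (u v : V) : Prop :=
  ∃ p : G.Walk u v, ∀ z ∈ p.support, z ∈ s

namespace ReachIn

variable {s t : Set V}

lemma refl (hu : u ∈ s) : G.ReachIn s u u := ⟨.nil, by simpa using hu⟩

lemma symm (h : G.ReachIn s u v) : G.ReachIn s v u :=
  let ⟨p, hp⟩ := h
  ⟨p.reverse, fun z hz => hp z (by simpa using hz)⟩

lemma trans (h : G.ReachIn s u v) (h' : G.ReachIn s v w) : G.ReachIn s u w :=
  let ⟨p, hp⟩ := h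
  let ⟨q, hq⟩ := h'
  ⟨p.append q, fun z hz => (Walk.mem_support_append_iff _ _).mp hz |>.elim (hp z) (hq z)⟩

lemma of_adj (h : G.Adj u v) (hu : u ∈ s) (hv : v ∈ s) : G.ReachIn s u v :=
  ⟨h.toWalk, by simp [hu, hv]⟩

lemma mono (h : G.ReachIn s u v) (hst : s ⊆ t) : G.ReachIn t u v :=
  let ⟨p, hp⟩ := h
  ⟨p, fun z hz => hst (hp z hz)⟩

lemma mem_right (h : G.ReachIn s u v) : v ∈ s :=
  let ⟨p, hp⟩ := h
  hp v p.end_mem_support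

lemma reachIn_setOf_reachIn {a : V} (ha : G.ReachIn s a u) (h : G.ReachIn s u v) :
    G.ReachIn {z | G.ReachIn s a z} u v := by
  obtain ⟨p, hp⟩ := h
  induction p with
  | nil => exact refl ha
  | cons hadj p ih =>
    have ha' := ha.trans (of_adj hadj ha.mem_right (hp _ (by simp)))
    exact (of_adj hadj ha ha').trans (ih ha' fun z hz => hp z (by simp [hz]))

end ReachIn

lemma Walk.exists_adj_reachIn {s : V} {U : Set V} (p : G.Walk u v)
    (hp : ∀ z ∈ p.support, z ∈ insert s U) (hs : s ∈ p.support) (hu : u ≠ s) :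
    ∃ z, G.Adj z s ∧ G.ReachIn U u z := by
  induction p with
  | nil => exact (hu (List.mem_singleton.mp (by simpa using hs)).symm).elim
  | @cons u x _ hadj p ih =>
    have huU : u ∈ U := (hp u (by simp)).resolve_left hu
    by_cases hx : x = s
    · exact ⟨u, hx ▸ hadj, .refl huU⟩
    have hxU : x ∈ U := (hp x (by simp)).resolve_left hx
    obtain ⟨z, hzs, hxz⟩ := ih (fun z hz => hp z (by simp [hz]))
      ((List.mem_cons.mp (by simpa using hs)).resolve_left (Ne.symm hu)) hx
    exact ⟨z, hzs, (ReachIn.of_adj hadj huU hxU).trans hxz⟩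

structure IsMinSeparator (G : SimpleGraph V) (T S : Finset V) (a b : V) : Prop where
  subset : S ⊆ T
  left_notMem : a ∉ S
  right_notMem : b ∉ S
  not_reachIn : ¬ G.ReachIn ↑(T \ S) a b
  reachIn_erase : ∀ s ∈ S, G.ReachIn ↑(T \ S.erase s) a b

lemma exists_isMinSeparator {T : Finset V} {a b : V} (hab : a ≠ b) (hnadj : ¬ G.Adj a b) :
    ∃ S, G.IsMinSeparator T S a b := by
  set seps := ((T.erase a).erase b).powerset.filter fun S => ¬ G.ReachIn ↑(T \ S) a b
  have hfull : (T.erase a).erase b ∈ seps := by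
    simp only [seps, mem_filter, mem_powerset_self, true_and]
    rintro ⟨p, hp⟩
    have hsub : ∀ z ∈ p.support, z ∈ insert b ({a} : Set V) := fun z hz => by
      have := hp z hz
      simp only [coe_sdiff, Set.mem_sdiff, mem_coe, mem_erase] at this
      simp only [Set.mem_insert_iff, Set.mem_singleton_iff]
      tauto
    obtain ⟨z, hzb, hz⟩ := p.exists_adj_reachIn hsub p.end_mem_support hab
    rw [Set.mem_singleton_iff.mp hz.mem_right] at hzb
    exact hnadj hzb
  obtain ⟨S, hS, hmin⟩ := exists_min_image seps card ⟨_, hfull⟩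
  rw [mem_filter, mem_powerset] at hS
  refine ⟨S, hS.1.trans ((erase_subset _ _).trans (erase_subset _ _)),
    fun h => by simpa using hS.1 h, fun h => by simpa using hS.1 h, hS.2, fun s hs => ?_⟩
  by_contra h
  have := hmin (S.erase s) (mem_filter.mpr
    ⟨mem_powerset.mpr ((erase_subset _ _).trans hS.1), h⟩)
  have := card_erase_lt_of_mem hs
  omega

namespace IsMinSeparator

variable {T S : Finset V} {a b : V}

lemma symm (hS : G.IsMinSeparator T S a b) : G.IsMinSeparator T S b a :=
  ⟨hS.subset, hS.right_notMem, hS.left_notMem, fun h => hS.not_reachIn h.symm,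
    fun s hs => (hS.reachIn_erase s hs).symm⟩

lemma not_reachIn_right_of_left (hS : G.IsMinSeparator T S a b) {z : V}
    (ha : G.ReachIn ↑(T \ S) a z) : ¬ G.ReachIn ↑(T \ S) b z :=
  fun hb => hS.not_reachIn (ha.trans hb.symm)

lemma exists_adj (hS : G.IsMinSeparator T S a b) {s : V} (hs : s ∈ S) :
    ∃ z, G.Adj z s ∧ G.ReachIn ↑(T \ S) a z := by
  obtain ⟨p, hp⟩ := hS.reachIn_erase s hs
  have hsub : ∀ z ∈ p.support, z ∈ insert s (↑(T \ S) : Set V) := fun z hz => by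
    have := hp z hz
    simp only [coe_sdiff, Set.mem_sdiff, mem_coe, mem_erase, Set.mem_insert_iff] at this ⊢
    tauto
  have hsp : s ∈ p.support := by
    by_contra h
    exact hS.not_reachIn ⟨p, fun z hz => ((hsub z hz).resolve_left fun hzs => h (hzs ▸ hz))⟩
  exact p.exists_adj_reachIn hsub hsp fun h => hS.left_notMem (h ▸ hs)

lemma reachIn_through (hS : G.IsMinSeparator T S a b) {x y : V} (hx : x ∈ S) (hy : y ∈ S) :
    G.ReachIn (insert x (insert y {z | G.ReachIn ↑(T \ S) a z})) x y := by
  obtain ⟨zx, hzx, hazx⟩ := hS.exists_adj hx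
  obtain ⟨zy, hzy, hazy⟩ := hS.exists_adj hy
  have hsub : {z | G.ReachIn ↑(T \ S) a z} ⊆ insert x (insert y {z | G.ReachIn ↑(T \ S) a z}) :=
    (Set.subset_insert _ _).trans (Set.subset_insert _ _)
  exact (ReachIn.of_adj hzx.symm (by simp) (hsub hazx)).trans
    (((ReachIn.reachIn_setOf_reachIn hazx (hazx.symm.trans hazy)).mono hsub).trans
      (ReachIn.of_adj hzy (hsub hazy) (by simp)))

lemma isClique (hG : G.IsChordal) (hS : G.IsMinSeparator T S a b) : G.IsClique (S : Set V) := by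
  intro x hx y hy hxy
  by_contra hnadj
  obtain ⟨p, hp⟩ := hS.reachIn_through hx hy
  obtain ⟨p, hp⟩ := p.exists_isShortestIn hp
  obtain ⟨q, hq⟩ := (hS.symm.reachIn_through hy hx)
  obtain ⟨q, hq⟩ := q.exists_isShortestIn hq
  -- `p` runs through the component of `a` and `q` through that of `b`, so `p ++ q` is chordless.
  refine hG.false_of_isInducedPath_append p q hp.isInducedPath hq.isInducedPath
    (p.two_le_length_of_not_adj hxy hnadj) (q.two_le_length_of_not_adj hxy.symm
    fun h => hnadj h.symm) fun i j hi hj0 hj => ?_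
  have hqj := hq.getVert_mem hj0 hj
  rcases i.eq_zero_or_pos with rfl | hi0
  · have hxq : x ∉ {z | G.ReachIn ↑(T \ S) b z} := fun h => by simpa [hx] using h.mem_right
    refine ⟨fun h => hxq (Walk.getVert_zero p ▸ h ▸ hqj), fun hadj => ⟨rfl, ?_⟩⟩
    have := (hq.isInducedPath j q.length hj le_rfl).2 (by simpa using hadj.symm)
    omega
  · have hpi := hp.getVert_mem hi0 hi
    refine ⟨fun h => hS.not_reachIn_right_of_left hpi (h ▸ hqj), fun hadj => ?_⟩
    exact (hS.not_reachIn_right_of_left (hpi.trans (.of_adj hadj hpi.mem_right hqj.mem_right))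
      hqj).elim

end IsMinSeparator

def IsSimplicialIn (G : SimpleGraph V) (T : Finset V) (v : V) : Prop :=
  v ∈ T ∧ G.IsClique (G.neighborSet v ∩ T)

lemma IsSimplicialIn.of_subset {T T' : Finset V} (hv : G.IsSimplicialIn T' v) (hT : T' ⊆ T)
    (hN : G.neighborSet v ∩ T ⊆ T') : G.IsSimplicialIn T v :=
  ⟨hT hv.1, hv.2.subset (Set.subset_inter Set.inter_subset_left hN)⟩

lemma IsMinSeparator.exists_isSimplicialIn {T S : Finset V} {a b : V} (hG : G.IsChordal)
    (hS : G.IsMinSeparator T S a b) (ha : a ∈ T) (hb : b ∈ T)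
    (ih : ∀ T' ⊂ T, G.IsClique (T' : Set V) ∨
      ∃ c d, c ≠ d ∧ ¬ G.Adj c d ∧ G.IsSimplicialIn T' c ∧ G.IsSimplicialIn T' d) :
    ∃ c, G.ReachIn ↑(T \ S) a c ∧ G.IsSimplicialIn T c := by
  -- A simplicial vertex of `G[T']` in the component of `a` is simplicial in `G[T]`, as all its
  -- neighbours in `T` lie in `T'`; since `S` is a clique, `G[T']` has one.
  set T' := S ∪ (T \ S).filter (G.ReachIn ↑(T \ S) a)
  have hT' : T' ⊂ T := (ssubset_iff_of_subset (union_subset hS.subset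
    ((filter_subset _ _).trans sdiff_subset))).mpr ⟨b, hb, fun h => (mem_union.mp h).elim
      hS.right_notMem fun h => hS.not_reachIn (mem_filter.mp h).2⟩
  have haU : a ∈ (↑(T \ S) : Set V) := by simpa using ⟨ha, hS.left_notMem⟩
  have hlift : ∀ c, G.ReachIn ↑(T \ S) a c → G.IsSimplicialIn T' c →
      ∃ c, G.ReachIn ↑(T \ S) a c ∧ G.IsSimplicialIn T c := by
    refine fun c hc hcT' => ⟨c, hc, hcT'.of_subset hT'.subset fun z ⟨hcz, hz⟩ => ?_⟩
    by_cases hzS : z ∈ S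
    · exact mem_union_left _ hzS
    have hzU : z ∈ (↑(T \ S) : Set V) := by simpa using ⟨hz, hzS⟩
    exact mem_union_right _ (mem_filter.mpr ⟨hzU, hc.trans (.of_adj hcz hc.mem_right hzU)⟩)
  rcases ih T' hT' with hcl | ⟨c, d, hcd, hnadj, hc, hd⟩
  · exact hlift a (.refl haU)
      ⟨mem_union_right _ (mem_filter.mpr ⟨haU, .refl haU⟩), hcl.subset Set.inter_subset_right⟩
  have hout : ∀ c, G.IsSimplicialIn T' c → c ∉ S →
      ∃ c, G.ReachIn ↑(T \ S) a c ∧ G.IsSimplicialIn T c := fun c hc hcS =>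
    hlift c (mem_filter.mp ((mem_union.mp hc.1).resolve_left hcS)).2 hc
  by_cases hcS : c ∈ S
  · by_cases hdS : d ∈ S
    · exact (hnadj (hS.isClique hG hcS hdS hcd)).elim
    · exact hout d hd hdS
  · exact hout c hc hcS

/-- Dirac's lemma. -/
theorem IsChordal.isClique_or_exists_isSimplicialIn (hG : G.IsChordal) (T : Finset V) :
    G.IsClique (T : Set V) ∨
      ∃ c d, c ≠ d ∧ ¬ G.Adj c d ∧ G.IsSimplicialIn T c ∧ G.IsSimplicialIn T d := by
  induction T using Finset.strongInduction with
  | _ T ih =>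
  by_cases hT : G.IsClique (T : Set V)
  · exact .inl hT
  obtain ⟨a, ha, b, hb, hab, hnadj⟩ : ∃ a ∈ T, ∃ b ∈ T, a ≠ b ∧ ¬ G.Adj a b := by
    simpa [IsClique, Set.Pairwise] using hT
  obtain ⟨S, hS⟩ := exists_isMinSeparator hab hnadj
  obtain ⟨c, hac, hc⟩ := hS.exists_isSimplicialIn hG ha hb ih
  obtain ⟨d, hbd, hd⟩ := hS.symm.exists_isSimplicialIn hG hb ha ih
  refine .inr ⟨c, d, fun h => hS.not_reachIn_right_of_left (h ▸ hac) hbd, fun h => ?_, hc, hd⟩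
  exact hS.not_reachIn_right_of_left (hac.trans (.of_adj h hac.mem_right hbd.mem_right)) hbd

lemma IsChordal.exists_isSimplicialIn (hG : G.IsChordal) {T : Finset V} (hT : T.Nonempty) :
    ∃ v, G.IsSimplicialIn T v := by
  rcases hG.isClique_or_exists_isSimplicialIn T with hT' | ⟨c, -, -, -, hc, -⟩
  · obtain ⟨v, hv⟩ := hT
    exact ⟨v, hv, hT'.subset Set.inter_subset_right⟩
  · exact ⟨c, hc⟩

end SimpleGraph

lemma sum_range_neg_one_pow_mul_choose_nonneg (n m : ℕ) :
    0 ≤ ∑ k ∈ range (2 * m + 1), (-1 : ℝ) ^ k * n.choose k := by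
  cases n with
  | zero => simp [sum_range_succ']
  | succ n =>
    have h : ∑ k ∈ range (2 * m + 1), (-1 : ℝ) ^ k * (n + 1).choose k = n.choose (2 * m) := by
      exact_mod_cast (by simpa [pow_mul] using
        Int.alternating_sum_range_choose_eq_choose (n := n) (m := 2 * m))
    rw [h]
    positivity

lemma sum_powerset_neg_one_pow_card_le_nonneg {α : Type*} (N : Finset α) (m : ℕ) :
    0 ≤ ∑ J ∈ N.powerset with #J ≤ 2 * m, (-1 : ℝ) ^ #J := by
  rw [← sum_fiberwise_of_maps_to (t := range (2 * m + 1)) (g := card)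
    (fun J hJ => mem_range.mpr (Nat.lt_succ_of_le (mem_filter.mp hJ).2))]
  have hfiber : ∀ k ∈ range (2 * m + 1),
      ∑ J ∈ (N.powerset.filter (#· ≤ 2 * m)).filter (#· = k), (-1 : ℝ) ^ #J =
        (-1) ^ k * (#N).choose k := by
    intro k hk
    have hk := mem_range.mp hk
    rw [← card_powersetCard, mul_comm ((-1 : ℝ) ^ k), ← nsmul_eq_mul, ← sum_const]
    refine sum_congr (ext fun J => ?_) fun J hJ => by rw [(mem_powersetCard.mp hJ).2]
    simp only [mem_filter, mem_powerset, mem_powersetCard]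
    exact ⟨fun h => ⟨h.1.1, h.2⟩, fun h => ⟨⟨h.1, by omega⟩, h.2⟩⟩
  rw [sum_congr rfl hfiber]
  exact sum_range_neg_one_pow_mul_choose_nonneg _ _

namespace SimpleGraph

variable {V : Type*} {G : SimpleGraph V}

noncomputable def truncCliqueEulerChar (G : SimpleGraph V) (k : ℕ) (T : Finset V) : ℝ :=
  ∑ I ∈ T.powerset.filter (fun I : Finset V => I.Nonempty ∧ G.IsClique (I : Set V) ∧ #I ≤ k),
    (-1) ^ (#I - 1)

lemma truncCliqueEulerChar_eq_of_isSimplicialIn {T : Finset V} {v : V}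
    (hv : G.IsSimplicialIn T v) (k : ℕ) :
    G.truncCliqueEulerChar (k + 1) T = G.truncCliqueEulerChar (k + 1) (T.erase v) +
      ∑ J ∈ ((T.erase v).filter (G.Adj v)).powerset with #J ≤ k, (-1 : ℝ) ^ #J := by
  set T₀ := T.erase v
  have hvT : v ∉ T₀ := notMem_erase v T
  have hT : T = insert v T₀ := (insert_erase hv.1).symm
  rw [truncCliqueEulerChar, truncCliqueEulerChar, sum_filter, sum_filter, sum_filter, hT,
    sum_powerset_insert hvT]
  congr 1
  refine (sum_subset (powerset_mono.mpr (filter_subset _ _)) fun J hJ hJN => ?_).symm.trans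
    (sum_congr rfl fun J hJ => ?_)
  · obtain ⟨b, hbJ, hbN⟩ := not_subset.mp (mt mem_powerset.mpr hJN)
    have hb := mem_powerset.mp hJ hbJ
    rw [if_neg]
    rintro ⟨-, hcl, -⟩
    rw [coe_insert] at hcl
    exact hbN (mem_filter.mpr ⟨hb, isClique_insert.mp hcl |>.2 b hbJ (ne_of_mem_erase hb).symm⟩)
  · have hJN := mem_powerset.mp hJ
    have hvJ : v ∉ J := fun h => hvT (mem_filter.mp (hJN h)).1
    have hJnbr : (J : Set V) ⊆ G.neighborSet v ∩ T := fun b hb =>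
      ⟨(mem_filter.mp (hJN hb)).2, mem_of_mem_erase (mem_filter.mp (hJN hb)).1⟩
    have hcl : G.IsClique (insert v J : Set V) :=
      isClique_insert.mpr ⟨hv.2.subset hJnbr, fun b hb _ => (hJnbr hb).1⟩
    simp [card_insert_of_notMem hvJ, hcl]

theorem IsChordal.one_le_truncCliqueEulerChar (hG : G.IsChordal) (m : ℕ) {T : Finset V}
    (hT : T.Nonempty) : 1 ≤ G.truncCliqueEulerChar (2 * m + 1) T := by
  induction T using Finset.strongInduction with
  | _ T ih =>
  obtain ⟨v, hv⟩ := hG.exists_isSimplicialIn hT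
  rw [truncCliqueEulerChar_eq_of_isSimplicialIn hv]
  have hN := sum_powerset_neg_one_pow_card_le_nonneg ((T.erase v).filter (G.Adj v)) m
  rcases (T.erase v).eq_empty_or_nonempty with h | h
  · simp [h, truncCliqueEulerChar, filter_singleton]
  · linarith [ih _ (erase_ssubset hv.1) h]

lemma truncCliqueEulerChar_eq_sum_cliqueComplex [Fintype V] (k : ℕ) (T : Finset V) :
    G.truncCliqueEulerChar k T =
      ∑ I ∈ (G.cliqueComplex.filter (#· ≤ k)).filter (· ⊆ T), (-1) ^ (#I - 1) := by
  refine sum_congr (ext fun I => ?_) fun _ _ => rfl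
  simp only [cliqueComplex, mem_filter, mem_powerset, subset_univ, true_and]
  tauto

end SimpleGraph

theorem measureReal_iUnion_le_sum {Ω ι : Type*} [MeasurableSpace Ω] [Fintype ι] (μ : Measure Ω)
    [IsFiniteMeasure μ] {A : ι → Set Ω} (hA : ∀ i, MeasurableSet (A i))
    (𝒜 : Finset (Finset ι)) (w : Finset ι → ℝ) (h𝒜 : ∀ I ∈ 𝒜, I.Nonempty)
    (hw : ∀ T : Finset ι, T.Nonempty → 1 ≤ ∑ I ∈ 𝒜.filter (· ⊆ T), w I) :
    μ.real (⋃ i, A i) ≤ ∑ I ∈ 𝒜, w I * μ.real (⋂ i ∈ I, A i) := by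
  have hmeas : ∀ I : Finset ι, MeasurableSet (⋂ i ∈ I, A i) :=
    fun I => .biInter I.countable_toSet fun i _ => hA i
  have hpt : ∀ ω, (⋃ i, A i).indicator (1 : Ω → ℝ) ω ≤
      ∑ I ∈ 𝒜, w I * (⋂ i ∈ I, A i).indicator 1 ω := by
    intro ω
    set T := univ.filter (ω ∈ A ·)
    have hI : ∀ I, (⋂ i ∈ I, A i).indicator (1 : Ω → ℝ) ω = if I ⊆ T then 1 else 0 := by
      intro I
      simp [Set.indicator, subset_iff, T]
    simp only [hI, mul_ite, mul_one, mul_zero, ← sum_filter]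
    by_cases hω : ω ∈ ⋃ i, A i
    · obtain ⟨i, hi⟩ := Set.mem_iUnion.mp hω
      rw [Set.indicator_of_mem hω]
      exact hw T ⟨i, by simp [T, hi]⟩
    · have hT : T = ∅ := filter_eq_empty_iff.mpr fun i _ hi => hω (Set.mem_iUnion_of_mem i hi)
      rw [Set.indicator_of_notMem hω, sum_eq_zero fun I hI => ?_]
      obtain ⟨hI𝒜, hIT⟩ := mem_filter.mp hI
      exact absurd (subset_empty.mp (hT ▸ hIT)) (h𝒜 I hI𝒜).ne_empty
  have hint : ∀ s, MeasurableSet s → Integrable (s.indicator (1 : Ω → ℝ)) μ :=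
    fun s hs => (integrable_const 1).indicator hs
  calc μ.real (⋃ i, A i) = ∫ ω, (⋃ i, A i).indicator 1 ω ∂μ :=
        (integral_indicator_one (.iUnion hA)).symm
    _ ≤ ∫ ω, ∑ I ∈ 𝒜, w I * (⋂ i ∈ I, A i).indicator 1 ω ∂μ :=
        integral_mono (hint _ (.iUnion hA))
          (integrable_finsetSum _ fun I _ => (hint _ (hmeas I)).const_mul _) hpt
    _ = ∑ I ∈ 𝒜, w I * μ.real (⋂ i ∈ I, A i) := by
        rw [integral_finsetSum _ fun I _ => (hint _ (hmeas I)).const_mul _]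
        simp only [integral_const_mul, integral_indicator_one (hmeas _)]

theorem chordal_graph_sieve_upper_truncated {Ω V : Type*} [MeasurableSpace Ω] [Fintype V]
    (μ : Measure Ω) [IsProbabilityMeasure μ] (G : SimpleGraph V) (hG : G.IsChordal)
    (A : V → Set Ω) (hA : ∀ v, MeasurableSet (A v)) (r : ℕ) (hr : 0 < r) :
    (μ (⋃ v, A v)).toReal ≤
      ∑ I ∈ G.cliqueComplex.filter (fun I => I.card ≤ 2 * r - 1),
        (-1 : ℝ) ^ (I.card - 1) * (μ (⋂ i ∈ I, A i)).toReal := by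
  refine measureReal_iUnion_le_sum μ hA _ _ (fun I hI => ?_) fun T hT => ?_
  · exact (mem_filter.mp (mem_filter.mp hI).1).2.1
  · rw [← G.truncCliqueEulerChar_eq_sum_cliqueComplex, show 2 * r - 1 = 2 * (r - 1) + 1 by omega]
    exact hG.one_le_truncCliqueEulerChar (r - 1) hT
end

section
/- For any chordal graph G = (V,E) with V finite and any positive integer r, Σ_{I∈𝒞(G), |I|≤2r} (−1)^{|I|−1} ≤ c(G), where the sum runs over all elements I of the clique complex 𝒞(G) of cardinality at most 2r and c(G) is the number of connected components of G. -/
open MeasureTheory Finset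
open scoped Classical

/-!
Dirac's lemma: a finite chordal graph is complete or has two non-adjacent simplicial vertices
(vertices whose neighbourhood is a clique). For non-adjacent `a, b` and an inclusion-minimal
`a`–`b` separator `S`, every vertex of `S` has neighbours in the components `A ∋ a` and `B ∋ b`
of `G - S`, so two non-adjacent vertices of `S` would be joined by induced paths through `A` and
through `B` forming an induced cycle of length `≥ 4`. Hence `S` is a clique, and induction on
`G[A ∪ S]` and `G[B ∪ S]` yields a simplicial vertex in `A` and one in `B`.

Deleting a simplicial vertex `v` of degree `d` removes exactly the cliques `{v} ∪ T` with
`T ⊆ N(v)`, so the truncated sum for `G` is the one for `G - v` plus `∑_{k < 2r} (-1)^k C(d, k)`,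
which is `-C(d - 1, 2r - 1) ≤ 0` if `d > 0` and at most `1` if `d = 0`. Meanwhile `G - v` has no
more components than `G`, and one fewer when `v` is isolated. Induction on `|V|` concludes.
-/

namespace SimpleGraph

variable {V : Type*} {G : SimpleGraph V}

theorem cycleGraph_adj_mk_iff {n i j : ℕ} (hij : i < j) (hjn : j < n) :
    (cycleGraph n).Adj ⟨i, hij.trans hjn⟩ ⟨j, hjn⟩ ↔ j = i + 1 ∨ (i = 0 ∧ j = n - 1) := by
  rw [cycleGraph_adj', Fin.sub_def, Fin.sub_def]
  simp only
  rw [Nat.mod_eq_of_lt (by omega : n - j + i < n),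
    Nat.mod_eq_sub_mod (by omega : n ≤ n - i + j), Nat.mod_eq_of_lt (by omega : n - i + j - n < n)]
  omega

theorem isChordal_iff_forall_not_cycleGraph_isIndContained :
    G.IsChordal ↔ ∀ n, 4 ≤ n → ¬ cycleGraph n ⊴ G := by
  simp only [IsChordal, isIndContained_iff_exists_iso_induce, not_exists]
  exact forall₂_congr fun _ _ => forall_congr' fun _ =>
    not_congr ⟨fun ⟨e⟩ => ⟨e.symm⟩, fun ⟨e⟩ => ⟨e.symm⟩⟩

theorem IsChordal.induce (hG : G.IsChordal) (s : Set V) : (G.induce s).IsChordal := by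
  rw [isChordal_iff_forall_not_cycleGraph_isIndContained] at hG ⊢
  exact fun n hn hc => hG n hn (hc.trans (Embedding.induce s).isIndContained)

theorem cycleGraph_isIndContained_of_forall_lt {n : ℕ} (g : ℕ → V)
    (hg : ∀ i j, i < j → j < n →
      g i ≠ g j ∧ (G.Adj (g i) (g j) ↔ j = i + 1 ∨ (i = 0 ∧ j = n - 1))) :
    cycleGraph n ⊴ G := by
  have key : ∀ i j : Fin n, i < j → (G.Adj (g i) (g j) ↔ (cycleGraph n).Adj i j) := by
    rintro ⟨i, hi⟩ ⟨j, hj⟩ (hij : i < j)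
    rw [(hg i j hij hj).2, cycleGraph_adj_mk_iff hij hj]
  refine ⟨{ toFun := fun i => g i, inj' := fun i j hij => ?_, map_rel_iff' := fun {i j} => ?_ }⟩
  · by_contra hne
    rcases lt_or_gt_of_ne hne with h | h
    exacts [(hg i j h j.2).1 hij, (hg j i h i.2).1 hij.symm]
  · rcases lt_trichotomy i j with h | rfl | h
    · exact key i j h
    · simp
    · rw [G.adj_comm, (cycleGraph n).adj_comm]
      exact key j i h

def IsInducedPathOn (G : SimpleGraph V) (p : ℕ → V) (a b : ℕ) : Prop :=
  ∀ i j, a ≤ i → i < j → j ≤ b → p i ≠ p j ∧ (G.Adj (p i) (p j) ↔ j = i + 1)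

namespace IsInducedPathOn

variable {p q : ℕ → V} {a b : ℕ}

theorem congr (h : G.IsInducedPathOn p a b) (hpq : ∀ k, a ≤ k → k ≤ b → p k = q k) :
    G.IsInducedPathOn q a b := by
  intro i j hi hij hj
  rw [← hpq i hi (by omega), ← hpq j (by omega) hj]
  exact h i j hi hij hj

theorem reflect {l : ℕ} (h : G.IsInducedPathOn p 0 l) (n : ℕ) :
    G.IsInducedPathOn (fun k => p (n - k)) (n - l) n := by
  intro i j hi hij hj
  obtain ⟨hne, hadj⟩ := h (n - j) (n - i) (Nat.zero_le _) (by omega) (by omega)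
  exact ⟨hne.symm, by rw [G.adj_comm, hadj]; omega⟩

end IsInducedPathOn

theorem cycleGraph_isIndContained_of_isInducedPathOn {m n : ℕ} (g : ℕ → V) (hm : 0 < m)
    (hmn : m + 1 < n) (h₁ : G.IsInducedPathOn g 0 m) (h₂ : G.IsInducedPathOn g m n)
    (hcyc : g n = g 0)
    (hcross : ∀ i j, 0 < i → i < m → m < j → j < n → g i ≠ g j ∧ ¬ G.Adj (g i) (g j)) :
    cycleGraph n ⊴ G := by
  refine cycleGraph_isIndContained_of_forall_lt g fun i j hij hjn => ?_
  by_cases hjm : j ≤ m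
  · obtain ⟨hne, hadj⟩ := h₁ i j (Nat.zero_le _) hij hjm
    exact ⟨hne, by rw [hadj]; omega⟩
  by_cases him : m ≤ i
  · obtain ⟨hne, hadj⟩ := h₂ i j him hij hjn.le
    exact ⟨hne, by rw [hadj]; omega⟩
  rcases Nat.eq_zero_or_pos i with rfl | hi
  · obtain ⟨hne, hadj⟩ := h₂ j n (by omega) hjn le_rfl
    rw [hcyc] at hne hadj
    exact ⟨hne.symm, by rw [G.adj_comm, hadj]; omega⟩
  · obtain ⟨hne, hnadj⟩ := hcross i j hi (by omega) (by omega) hjn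
    exact ⟨hne, iff_of_false hnadj (by omega)⟩

/-- Walks are index functions rather than `SimpleGraph.Walk`s, so that they can be spliced and
glued by index arithmetic; only `p 0, …, p l` matter. -/
structure IsWalkThrough (G : SimpleGraph V) (T : Set V) (x y : V) (p : ℕ → V) (l : ℕ) :
    Prop where
  start : p 0 = x
  finish : p l = y
  adj : ∀ i < l, G.Adj (p i) (p (i + 1))
  interior : ∀ i, 0 < i → i < l → p i ∈ T

namespace IsWalkThrough

variable {T : Set V} {x y z : V} {p q : ℕ → V} {l l' : ℕ}

theorem nil (G : SimpleGraph V) (T : Set V) (x : V) : G.IsWalkThrough T x x (fun _ => x) 0 :=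
  ⟨rfl, rfl, fun _ h => absurd h (Nat.not_lt_zero _), fun _ _ h => absurd h (Nat.not_lt_zero _)⟩

theorem of_adj (T : Set V) (h : G.Adj x y) :
    G.IsWalkThrough T x y (fun k => if k = 0 then x else y) 1 :=
  ⟨rfl, rfl, fun i hi => by simpa [show i = 0 by omega] using h, fun _ _ _ => by omega⟩

theorem reverse (h : G.IsWalkThrough T x y p l) :
    G.IsWalkThrough T y x (fun k => p (l - k)) l where
  start := by simpa using h.finish
  finish := by simpa using h.start
  adj i hi := by
    simpa [show l - i = l - (i + 1) + 1 by omega] using (h.adj (l - (i + 1)) (by omega)).symm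
  interior i hi hil := h.interior (l - i) (by omega) (by omega)

theorem take (h : G.IsWalkThrough T x y p l) {i : ℕ} (hi : i ≤ l) :
    G.IsWalkThrough T x (p i) p i :=
  ⟨h.start, rfl, fun k hk => h.adj k (by omega), fun k hk hki => h.interior k hk (by omega)⟩

theorem append (h₁ : G.IsWalkThrough T x y p l) (h₂ : G.IsWalkThrough T y z q l')
    (hy : y ∈ T) :
    G.IsWalkThrough T x z (fun k => if k ≤ l then p k else q (k - l)) (l + l') := by
  set r : ℕ → V := fun k => if k ≤ l then p k else q (k - l)
  have hp : ∀ k ≤ l, r k = p k := fun k hk => if_pos hk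
  have hq : ∀ k, l ≤ k → r k = q (k - l) := fun k hk => by
    rcases hk.eq_or_lt with hkl | hk
    · rw [← hkl, hp l le_rfl, h₁.finish, Nat.sub_self, h₂.start]
    · exact if_neg (by omega)
  refine ⟨by rw [hp 0 (Nat.zero_le _), h₁.start], by rw [hq _ (by omega), Nat.add_sub_cancel_left,
    h₂.finish], fun k hk => ?_, fun k hk hkl => ?_⟩
  · rcases Nat.lt_or_ge k l with hkl | hkl
    · rw [hp k hkl.le, hp (k + 1) hkl]
      exact h₁.adj k hkl
    · rw [hq k hkl, hq (k + 1) (by omega), show k + 1 - l = k - l + 1 by omega]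
      exact h₂.adj (k - l) (by omega)
  · rcases lt_trichotomy k l with hlt | rfl | hgt
    · rw [hp k hlt.le]
      exact h₁.interior k hk hlt
    · rwa [hp k le_rfl, h₁.finish]
    · rw [hq k hgt.le]
      exact h₂.interior (k - l) (by omega) (by omega)

theorem splice (h : G.IsWalkThrough T x y p l) {i d : ℕ} (hidl : i + d + 1 ≤ l)
    (hadj : G.Adj (p i) (p (i + d + 1))) : ∃ q, G.IsWalkThrough T x y q (l - d) := by
  refine ⟨fun k => if k ≤ i then p k else p (k + d), ?_, ?_, fun k hk => ?_, fun k hk hkl => ?_⟩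
  · simpa using h.start
  · simp only [show ¬ l - d ≤ i by omega, if_false, Nat.sub_add_cancel (by omega : d ≤ l)]
    exact h.finish
  · rcases Nat.lt_trichotomy (k + 1) (i + 1) with hlt | heq | hgt
    · simpa [show k ≤ i by omega, show k + 1 ≤ i by omega] using h.adj k (by omega)
    · simpa [show k = i by omega, show ¬ i + 1 ≤ i by omega, show i + 1 + d = i + d + 1 by omega]
        using hadj
    · simpa [show ¬ k ≤ i by omega, show ¬ k + 1 ≤ i by omega,
        show k + 1 + d = k + d + 1 by omega] using h.adj (k + d) (by omega)
  · by_cases hki : k ≤ i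
    · simpa [hki] using h.interior k hk (by omega)
    · simpa [hki] using h.interior (k + d) (by omega) (by omega)

theorem two_le (h : G.IsWalkThrough T x y p l) (hxy : x ≠ y) (hnadj : ¬ G.Adj x y) : 2 ≤ l := by
  by_contra! hl
  interval_cases l
  · exact hxy (h.start.symm.trans h.finish)
  · exact hnadj (by simpa [h.start, h.finish] using h.adj 0 zero_lt_one)

theorem exists_isInducedPathOn (h : G.IsWalkThrough T x y p l) :
    ∃ q l', G.IsWalkThrough T x y q l' ∧ G.IsInducedPathOn q 0 l' := by
  have hex : ∃ l, ∃ q, G.IsWalkThrough T x y q l := ⟨l, p, h⟩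
  obtain ⟨q, hq⟩ := Nat.find_spec hex
  have hmin : ∀ {q' l'}, G.IsWalkThrough T x y q' l' → Nat.find hex ≤ l' :=
    fun h' => Nat.find_min' hex ⟨_, h'⟩
  refine ⟨q, _, hq, fun i j _ hij hj => ⟨fun heq => ?_, fun hadj => ?_, ?_⟩⟩
  · rcases hj.lt_or_eq with hj | hj
    · obtain ⟨q', hq'⟩ := hq.splice (i := i) (d := j - i) (by omega)
        (by rw [heq, show i + (j - i) + 1 = j + 1 by omega]; exact hq.adj j hj)
      have := hmin hq'
      omega
    · have hy : q i = y := by rw [heq, hj, hq.finish]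
      have := hmin (hy ▸ hq.take (i := i) (by omega))
      omega
  · by_contra hne
    obtain ⟨q', hq'⟩ := hq.splice (i := i) (d := j - i - 1) (by omega)
      (by rwa [show i + (j - i - 1) + 1 = j by omega])
    have := hmin hq'
    omega
  · rintro rfl
    exact hq.adj i (by omega)

end IsWalkThrough

/-- Shortest such walks are induced paths, and the two of them close up to an induced cycle of
length at least `4`. -/
theorem IsChordal.adj_of_isWalkThrough (hG : G.IsChordal) {TA TB : Set V} {x y : V}
    {pA pB : ℕ → V} {lA lB : ℕ} (hxy : x ≠ y) (hA : G.IsWalkThrough TA x y pA lA)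
    (hB : G.IsWalkThrough TB x y pB lB) (hAB : ∀ u ∈ TA, ∀ w ∈ TB, u ≠ w ∧ ¬ G.Adj u w) :
    G.Adj x y := by
  by_contra hnadj
  obtain ⟨p, m, hp, hpi⟩ := hA.exists_isInducedPathOn
  obtain ⟨q, k, hq, hqi⟩ := hB.exists_isInducedPathOn
  have hm := hp.two_le hxy hnadj
  have hk := hq.two_le hxy hnadj
  let g : ℕ → V := fun i => if i ≤ m then p i else q (m + k - i)
  have hgq : ∀ i, m ≤ i → g i = q (m + k - i) := fun i hi => by
    rcases hi.eq_or_lt with him | hi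
    · simp only [g, ← him, le_rfl, if_true, Nat.add_sub_cancel_left, hp.finish, hq.finish]
    · exact if_neg (by omega)
  refine isChordal_iff_forall_not_cycleGraph_isIndContained.1 hG (m + k) (by omega)
    (cycleGraph_isIndContained_of_isInducedPathOn (m := m) (n := m + k) g (by omega) (by omega)
      ?_ ?_ ?_ ?_)
  · exact hpi.congr fun i _ hi => (if_pos hi).symm
  · simpa using (hqi.reflect (m + k)).congr fun i hi _ => (hgq i (by omega)).symm
  · rw [hgq _ (by omega), Nat.sub_self, hq.start]
    exact (if_pos (Nat.zero_le m)).trans hp.start |>.symm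
  · intro i j hi him hmj hj
    rw [hgq j hmj.le, show g i = p i from if_pos him.le]
    exact hAB _ (hp.interior i hi him) _ (hq.interior _ (by omega) (by omega))

/-- For `c ∉ S`, the vertex set of the component of `c` in `G - S`. -/
def reachAvoiding (G : SimpleGraph V) (S : Set V) (c : V) : Set V :=
  {v | v ∉ S ∧ ∃ p l, G.IsWalkThrough Sᶜ c v p l}

section reachAvoiding

variable {S : Set V} {c u v w x y : V}

theorem mem_reachAvoiding_self (hc : c ∉ S) : c ∈ G.reachAvoiding S c :=
  ⟨hc, _, 0, .nil G _ c⟩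

theorem mem_reachAvoiding_of_adj (hv : v ∈ G.reachAvoiding S c) (hadj : G.Adj v w) (hw : w ∉ S) :
    w ∈ G.reachAvoiding S c := by
  obtain ⟨hvS, p, l, hp⟩ := hv
  exact ⟨hw, _, l + 1, hp.append (.of_adj _ hadj) hvS⟩

theorem neighborSet_subset_reachAvoiding_union (hv : v ∈ G.reachAvoiding S c) :
    G.neighborSet v ⊆ G.reachAvoiding S c ∪ S := fun w hw =>
  (em (w ∈ S)).elim Or.inr fun hwS => Or.inl (mem_reachAvoiding_of_adj hv hw hwS)

theorem IsWalkThrough.reachAvoiding {p : ℕ → V} {l : ℕ} (h : G.IsWalkThrough Sᶜ c v p l) :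
    G.IsWalkThrough (G.reachAvoiding S c) c v p l :=
  ⟨h.start, h.finish, h.adj, fun i hi hil => ⟨h.interior i hi hil, p, i, h.take hil.le⟩⟩

theorem exists_isWalkThrough_reachAvoiding (hc : c ∉ S) (hu : u ∈ G.reachAvoiding S c)
    (hw : w ∈ G.reachAvoiding S c) (hxu : G.Adj x u) (hwy : G.Adj w y) :
    ∃ p l, G.IsWalkThrough (G.reachAvoiding S c) x y p l := by
  obtain ⟨p, l, hp⟩ := hu.2
  obtain ⟨q, l', hq⟩ := hw.2
  have hpq := hp.reachAvoiding.reverse.append hq.reachAvoiding (mem_reachAvoiding_self hc)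
  exact ⟨_, _, ((IsWalkThrough.of_adj _ hxu).append hpq hu).append (.of_adj _ hwy) hw⟩

end reachAvoiding

def Separates (G : SimpleGraph V) (S : Set V) (a b : V) : Prop :=
  a ∉ S ∧ b ∉ S ∧ ∀ p l, ¬ G.IsWalkThrough Sᶜ a b p l

namespace Separates

variable {S : Set V} {a b s u w : V}

theorem symm (h : G.Separates S a b) : G.Separates S b a :=
  ⟨h.2.1, h.1, fun _ _ hp => h.2.2 _ _ hp.reverse⟩

theorem disjoint_reachAvoiding (h : G.Separates S a b) :
    Disjoint (G.reachAvoiding S a) (G.reachAvoiding S b) := by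
  refine Set.disjoint_left.2 fun u hua hub => ?_
  obtain ⟨p, l, hp⟩ := hua.2
  obtain ⟨q, l', hq⟩ := hub.2
  exact h.2.2 _ _ (hp.append hq.reverse hua.1)

theorem ne_and_not_adj (h : G.Separates S a b) (hu : u ∈ G.reachAvoiding S a)
    (hw : w ∈ G.reachAvoiding S b) : u ≠ w ∧ ¬ G.Adj u w :=
  ⟨fun huw => h.disjoint_reachAvoiding.notMem_of_mem_left hu (huw ▸ hw), fun hadj =>
    h.disjoint_reachAvoiding.notMem_of_mem_left (mem_reachAvoiding_of_adj hu hadj hw.1) hw⟩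

theorem notMem_reachAvoiding (h : G.Separates S a b) : b ∉ G.reachAvoiding S a :=
  h.disjoint_reachAvoiding.notMem_of_mem_right (mem_reachAvoiding_self h.2.1)

theorem exists_adj_of_not_separates_diff (h : G.Separates S a b)
    (hmin : ¬ G.Separates (S \ {s}) a b) : ∃ u ∈ G.reachAvoiding S a, G.Adj u s := by
  obtain ⟨p, l, hp⟩ : ∃ p l, G.IsWalkThrough (S \ {s})ᶜ a b p l := by
    by_contra! hno
    exact hmin ⟨fun ha => h.1 ha.1, fun hb => h.2.1 hb.1, hno⟩
  -- the walk leaves the component of `a` for the first time at `p k = s`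
  have hex : ∃ k, p k ∉ G.reachAvoiding S a := ⟨l, hp.finish ▸ h.notMem_reachAvoiding⟩
  obtain ⟨k, hk⟩ : ∃ k, Nat.find hex = k := ⟨_, rfl⟩
  have hkspec : p k ∉ G.reachAvoiding S a := hk ▸ Nat.find_spec hex
  have hk0 : k ≠ 0 := fun hk0 => hkspec (by rw [hk0, hp.start]; exact mem_reachAvoiding_self h.1)
  have hkl : k ≤ l := hk ▸ Nat.find_min' hex (hp.finish ▸ h.notMem_reachAvoiding)
  have hprev : p (k - 1) ∈ G.reachAvoiding S a := not_not.1 (Nat.find_min hex (by omega))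
  have hadj : G.Adj (p (k - 1)) (p k) := by
    simpa [Nat.sub_add_cancel (Nat.pos_of_ne_zero hk0)] using hp.adj (k - 1) (by omega)
  have hkS : p k ∈ S := by_contra fun hkS =>
    hkspec (mem_reachAvoiding_of_adj hprev hadj hkS)
  have hks : p k = s := by
    by_contra hne
    rcases hkl.lt_or_eq with hkl | hkl
    · exact hp.interior k (Nat.pos_of_ne_zero hk0) hkl ⟨hkS, hne⟩
    · exact h.2.1 (hp.finish ▸ hkl ▸ hkS)
  exact ⟨_, hprev, hks ▸ hadj⟩

end Separates

theorem separates_compl_pair {a b : V} (hab : a ≠ b) (hnadj : ¬ G.Adj a b) :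
    G.Separates {a, b}ᶜ a b := by
  refine ⟨by simp, by simp, fun p l hp => ?_⟩
  have hl := hp.two_le hab hnadj
  have h1 : p 1 = a ∨ p 1 = b := by simpa using hp.interior 1 one_pos (by omega)
  have hadj := hp.adj 0 (by omega)
  rw [hp.start] at hadj
  rcases h1 with h1 | h1 <;> rw [h1] at hadj
  exacts [G.irrefl hadj, hnadj hadj]

theorem IsChordal.isClique_of_separates (hG : G.IsChordal) {S : Set V} {a b : V}
    (hS : G.Separates S a b) (hmin : ∀ s ∈ S, ¬ G.Separates (S \ {s}) a b) : G.IsClique S := by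
  intro x hx y hy hxy
  have hmin' : ∀ s ∈ S, ¬ G.Separates (S \ {s}) b a := fun s hs h => hmin s hs h.symm
  obtain ⟨u, hu, hux⟩ := hS.exists_adj_of_not_separates_diff (hmin x hx)
  obtain ⟨u', hu', hu'y⟩ := hS.exists_adj_of_not_separates_diff (hmin y hy)
  obtain ⟨w, hw, hwx⟩ := hS.symm.exists_adj_of_not_separates_diff (hmin' x hx)
  obtain ⟨w', hw', hw'y⟩ := hS.symm.exists_adj_of_not_separates_diff (hmin' y hy)
  obtain ⟨pA, lA, hA⟩ := exists_isWalkThrough_reachAvoiding hS.1 hu hu' hux.symm hu'y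
  obtain ⟨pB, lB, hB⟩ := exists_isWalkThrough_reachAvoiding hS.2.1 hw hw' hwx.symm hw'y
  exact hG.adj_of_isWalkThrough hxy hA hB fun _ hu _ hw => hS.ne_and_not_adj hu hw

def IsSimplicial (G : SimpleGraph V) (v : V) : Prop := G.IsClique (G.neighborSet v)

theorem IsSimplicial.of_induce {t : Set V} {v : t} (hvt : G.neighborSet v ⊆ t)
    (h : (G.induce t).IsSimplicial v) : G.IsSimplicial v := fun x hx y hy hxy =>
  @h ⟨x, hvt hx⟩ hx ⟨y, hvt hy⟩ hy fun h => hxy (congrArg Subtype.val h)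

theorem exists_isSimplicial_of_induce_union {R S : Set V} (hR : R.Nonempty) (hS : G.IsClique S)
    (hRS : ∀ v ∈ R, G.neighborSet v ⊆ R ∪ S)
    (h : G.induce (R ∪ S) = ⊤ ∨ ∃ v w, v ≠ w ∧ ¬ (G.induce (R ∪ S)).Adj v w ∧
      (G.induce (R ∪ S)).IsSimplicial v ∧ (G.induce (R ∪ S)).IsSimplicial w) :
    ∃ v ∈ R, G.IsSimplicial v := by
  suffices ∃ v : ↥(R ∪ S), ↑v ∈ R ∧ (G.induce (R ∪ S)).IsSimplicial v by
    obtain ⟨v, hvR, hv⟩ := this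
    exact ⟨v, hvR, hv.of_induce (hRS v hvR)⟩
  rcases h with htop | ⟨v, w, hvw, hnadj, hv, hw⟩
  · obtain ⟨c, hc⟩ := hR
    exact ⟨⟨c, Or.inl hc⟩, hc, htop ▸ fun _ _ _ _ => id⟩
  · by_contra! hno
    have hvS : (v : V) ∈ S := v.2.resolve_left fun hvR => hno v hvR hv
    have hwS : (w : V) ∈ S := w.2.resolve_left fun hwR => hno w hwR hw
    exact hnadj (hS hvS hwS (Subtype.coe_injective.ne hvw))

theorem IsChordal.eq_top_or_exists_isSimplicial [Finite V] (hG : G.IsChordal) :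
    G = ⊤ ∨ ∃ v w, v ≠ w ∧ ¬ G.Adj v w ∧ G.IsSimplicial v ∧ G.IsSimplicial w := by
  induction h : Nat.card V using Nat.strong_induction_on generalizing V with
  | _ n ih =>
  refine or_iff_not_imp_left.2 fun htop => ?_
  obtain ⟨a, b, hab, hnadj⟩ : ∃ a b, a ≠ b ∧ ¬ G.Adj a b := by
    by_contra! hall
    exact htop (eq_top_iff.2 fun a b hab => hall a b hab)
  obtain ⟨S, hS, hSmin⟩ :=
    exists_minimal_of_wellFoundedLT (G.Separates · a b) ⟨_, separates_compl_pair hab hnadj⟩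
  have hclique := hG.isClique_of_separates hS fun s hs hs' =>
    (hSmin hs' Set.sdiff_subset hs).2 rfl
  have side : ∀ {c d}, G.Separates S c d → ∃ v ∈ G.reachAvoiding S c, G.IsSimplicial v := by
    intro c d hcd
    have hd : d ∉ G.reachAvoiding S c ∪ S := fun hd => hd.elim hcd.notMem_reachAvoiding hcd.2.1
    exact exists_isSimplicial_of_induce_union ⟨c, mem_reachAvoiding_self hcd.1⟩ hclique
      (fun v hv => neighborSet_subset_reachAvoiding_union hv)
      (ih _ (h ▸ Finite.card_subtype_lt hd) (hG.induce _) rfl)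
  obtain ⟨v, hv, hvs⟩ := side hS
  obtain ⟨w, hw, hws⟩ := side hS.symm
  exact ⟨v, w, (hS.ne_and_not_adj hv hw).1, (hS.ne_and_not_adj hv hw).2, hvs, hws⟩

theorem IsChordal.exists_isSimplicial [Finite V] [Nonempty V] (hG : G.IsChordal) :
    ∃ v, G.IsSimplicial v := by
  rcases hG.eq_top_or_exists_isSimplicial with rfl | ⟨v, -, -, -, hv, -⟩
  · exact ⟨Classical.arbitrary V, fun _ _ _ _ => id⟩
  · exact ⟨v, hv⟩

section Components

variable {v : V}

/-- A walk through `v` is rerouted along the edge joining the two neighbours of `v` on it. -/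
theorem IsSimplicial.reachable_induce_compl_of_walk (hv : G.IsSimplicial v) {u y : V}
    (p : G.Walk u y) (hy : y ≠ v) (x : V) (hx : x ≠ v) (hxu : x = u ∨ (u = v ∧ G.Adj x v)) :
    (G.induce {v}ᶜ).Reachable ⟨x, hx⟩ ⟨y, hy⟩ := by
  induction p generalizing x with
  | nil =>
    rcases hxu with rfl | ⟨rfl, -⟩
    · rfl
    · exact absurd rfl hy
  | @cons u z y h q ih =>
    by_cases hz : z = v
    · subst hz
      obtain rfl : x = u := hxu.resolve_right fun ⟨huz, _⟩ => G.ne_of_adj h huz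
      exact ih hy x hx (Or.inr ⟨rfl, h⟩)
    · refine Reachable.trans ?_ (ih hy z hz (Or.inl rfl))
      have hxz : x = z ∨ G.Adj x z := by
        rcases hxu with rfl | ⟨rfl, hxv⟩
        · exact Or.inr h
        · exact (eq_or_ne x z).imp_right (hv hxv.symm h)
      rcases hxz with rfl | hxz
      · rfl
      · exact Adj.reachable hxz

theorem IsSimplicial.connectedComponentMap_injective (hv : G.IsSimplicial v) :
    Function.Injective (ConnectedComponent.map (Embedding.induce (G := G) {v}ᶜ).toHom) := by
  refine fun c d => ConnectedComponent.ind₂ (fun x y hxy => ?_) c d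
  obtain ⟨p⟩ := ConnectedComponent.eq.1 hxy
  exact ConnectedComponent.eq.2 (hv.reachable_induce_compl_of_walk p y.2 x x.2 (Or.inl rfl))

theorem IsSimplicial.card_connectedComponent_induce_compl_le [Finite V] (hv : G.IsSimplicial v) :
    Nat.card (G.induce {v}ᶜ).ConnectedComponent ≤ Nat.card G.ConnectedComponent :=
  Nat.card_le_card_of_injective _ hv.connectedComponentMap_injective

theorem card_connectedComponent_induce_compl_lt [Finite V] (hisol : ∀ u, ¬ G.Adj v u) :
    Nat.card (G.induce {v}ᶜ).ConnectedComponent < Nat.card G.ConnectedComponent := by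
  have hinj := IsSimplicial.connectedComponentMap_injective (G := G) fun x hx => absurd hx (hisol x)
  have hmiss : G.connectedComponentMk v ∉ Set.range
      (ConnectedComponent.map (Embedding.induce (G := G) {v}ᶜ).toHom) := by
    rintro ⟨c, hc⟩
    induction c using ConnectedComponent.ind with | h x =>
    obtain ⟨p⟩ := ConnectedComponent.eq.1 hc
    exact hisol _ (p.reverse.adj_snd (Walk.not_nil_of_ne fun h => x.2 h.symm))
  calc Nat.card (G.induce {v}ᶜ).ConnectedComponent = Nat.card (Set.range _) :=
        (Nat.card_range_of_injective hinj).symm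
    _ < _ := Finite.card_subtype_lt hmiss

end Components

theorem sum_range_two_mul_neg_one_pow_mul_choose_nonpos {d : ℕ} (hd : d ≠ 0) (r : ℕ) :
    ∑ k ∈ range (2 * r), (-1 : ℤ) ^ k * (d.choose k : ℤ) ≤ 0 := by
  obtain ⟨d, rfl⟩ := Nat.exists_eq_succ_of_ne_zero hd
  rcases r with _ | r
  · simp
  · rw [show 2 * (r + 1) = 2 * r + 1 + 1 by ring, Int.alternating_sum_range_choose_eq_choose,
      (odd_two_mul_add_one r).neg_one_pow]
    simp

theorem sum_powerset_filter_card_lt_neg_one_pow {α : Type*} (s : Finset α) (m : ℕ) :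
    ∑ T ∈ s.powerset.filter (fun T => T.card < m), (-1 : ℤ) ^ T.card =
      ∑ k ∈ range m, (-1) ^ k * (s.card.choose k : ℤ) := by
  rw [← Finset.sum_fiberwise_of_maps_to (g := Finset.card) (t := range m)
    fun T hT => mem_range.2 (mem_filter.1 hT).2]
  refine sum_congr rfl fun k hk => ?_
  have hfiber : (s.powerset.filter (fun T => T.card < m)).filter (fun T => T.card = k) =
      powersetCard k s := by
    ext T
    simp only [mem_filter, mem_powerset, mem_powersetCard]
    have := mem_range.1 hk
    constructor
    · exact fun h => ⟨h.1.1, h.2⟩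
    · exact fun h => ⟨⟨h.1, by omega⟩, h.2⟩
  rw [hfiber, sum_congr rfl fun T hT => by rw [(mem_powersetCard.1 hT).2], sum_const,
    card_powersetCard, nsmul_eq_mul, mul_comm]

section Counting

variable [Fintype V] {v : V}

@[simp] theorem mem_cliqueComplex {I : Finset V} :
    I ∈ G.cliqueComplex ↔ I.Nonempty ∧ G.IsClique (I : Set V) := by
  simp [cliqueComplex]

noncomputable def truncatedEulerChar (G : SimpleGraph V) (m : ℕ) : ℤ :=
  ∑ I ∈ G.cliqueComplex.filter (fun I => I.card ≤ m), (-1) ^ (I.card - 1)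

theorem truncatedEulerChar_of_isEmpty [IsEmpty V] (m : ℕ) : G.truncatedEulerChar m = 0 :=
  Finset.sum_eq_zero fun _ hI =>
    isEmptyElim (mem_cliqueComplex.1 (mem_filter.1 hI).1).1.choose

theorem truncatedEulerChar_induce (s : Set V) [Fintype s] (m : ℕ) :
    (G.induce s).truncatedEulerChar m =
      ∑ I ∈ G.cliqueComplex.filter (fun I : Finset V => I.card ≤ m ∧ ↑I ⊆ s),
        (-1) ^ (I.card - 1) := by
  refine Finset.sum_bij (fun I _ => I.map (Function.Embedding.subtype _))
    (fun I hI => ?_) (fun _ _ _ _ h => Finset.map_injective _ h) (fun J hJ => ?_)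
    (fun I _ => by rw [card_map])
  · simp only [mem_filter, mem_cliqueComplex] at hI ⊢
    refine ⟨⟨hI.1.1.map, ?_⟩, by rw [card_map]; exact hI.2, ?_⟩
    · rw [coe_map]
      exact isClique_induce_iff.1 hI.1.2
    · intro x hx
      obtain ⟨y, -, rfl⟩ := mem_map.1 hx
      exact y.2
  · simp only [mem_filter, mem_cliqueComplex] at hJ
    obtain ⟨⟨hne, hcl⟩, hcard, hJs⟩ := hJ
    have hmap : (J.subtype (· ∈ s)).map (Function.Embedding.subtype _) = J :=
      Finset.subtype_map_of_mem fun x hx => hJs hx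
    refine ⟨_, ?_, hmap⟩
    simp only [mem_filter, mem_cliqueComplex]
    refine ⟨⟨?_, ?_⟩, ?_⟩
    · rw [← Finset.map_nonempty (f := Function.Embedding.subtype _), hmap]
      exact hne
    · rw [isClique_induce_iff, ← Function.Embedding.coe_subtype, ← coe_map, hmap]
      exact hcl
    · rw [← card_map (Function.Embedding.subtype _), hmap]
      exact hcard

theorem IsSimplicial.sum_cliqueComplex_mem (hv : G.IsSimplicial v) (m : ℕ) :
    ∑ I ∈ G.cliqueComplex.filter (fun I => I.card ≤ m ∧ v ∈ I), (-1 : ℤ) ^ (I.card - 1) =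
      ∑ T ∈ (G.neighborFinset v).powerset.filter (fun T => T.card < m), (-1) ^ T.card := by
  have hvN : v ∉ G.neighborFinset v := G.notMem_neighborFinset_self v
  refine Finset.sum_nbij' (·.erase v) (insert v) (fun I hI => ?_) (fun T hT => ?_)
    (fun I hI => insert_erase (mem_filter.1 hI).2.2)
    (fun T hT => erase_insert fun hvT => hvN (mem_powerset.1 (mem_filter.1 hT).1 hvT))
    (fun I hI => by rw [card_erase_of_mem (mem_filter.1 hI).2.2])
  · simp only [mem_filter, mem_cliqueComplex, mem_powerset] at hI ⊢
    obtain ⟨⟨-, hcl⟩, hcard, hvI⟩ := hI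
    have := card_pos.2 ⟨v, hvI⟩
    refine ⟨fun u hu => ?_, by rw [card_erase_of_mem hvI]; omega⟩
    obtain ⟨huv, huI⟩ := mem_erase.1 hu
    exact (G.mem_neighborFinset _ _).2 (hcl hvI huI huv.symm)
  · simp only [mem_filter, mem_cliqueComplex, mem_powerset] at hT ⊢
    obtain ⟨hTN, hcard⟩ := hT
    have hvT : v ∉ T := fun hvT => hvN (hTN hvT)
    refine ⟨⟨insert_nonempty _ _, ?_⟩, by rw [card_insert_of_notMem hvT]; omega,
      mem_insert_self _ _⟩
    rw [coe_insert, isClique_insert]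
    refine ⟨hv.subset fun u hu => ?_, fun u hu _ => ?_⟩ <;>
      exact (G.mem_neighborFinset _ _).1 (hTN hu)

theorem IsSimplicial.truncatedEulerChar_eq (hv : G.IsSimplicial v) (m : ℕ) :
    G.truncatedEulerChar m = (G.induce {v}ᶜ).truncatedEulerChar m +
      ∑ k ∈ range m, (-1) ^ k * ((G.degree v).choose k : ℤ) := by
  rw [truncatedEulerChar_induce, ← card_neighborFinset_eq_degree,
    ← sum_powerset_filter_card_lt_neg_one_pow, ← hv.sum_cliqueComplex_mem, truncatedEulerChar,
    ← sum_filter_add_sum_filter_not _ (v ∈ ·), add_comm, filter_filter, filter_filter]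
  simp only [Set.subset_compl_singleton_iff, mem_coe]

theorem IsChordal.truncatedEulerChar_two_mul_le (hG : G.IsChordal) (r : ℕ) :
    G.truncatedEulerChar (2 * r) ≤ Nat.card G.ConnectedComponent := by
  induction h : Nat.card V using Nat.strong_induction_on generalizing V with
  | _ n ih =>
  rcases isEmpty_or_nonempty V with hV | hV
  · rw [truncatedEulerChar_of_isEmpty]
    positivity
  obtain ⟨v, hv⟩ := hG.exists_isSimplicial
  have hrec := ih _ (h ▸ Finite.card_subtype_lt (p := (· ∈ ({v}ᶜ : Set V))) (x := v) (by simp))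
    (hG.induce {v}ᶜ) rfl
  rw [hv.truncatedEulerChar_eq]
  rcases eq_or_ne (G.degree v) 0 with hd | hd
  · have hlt := card_connectedComponent_induce_compl_lt (G := G) (v := v) fun u hu =>
      (G.degree_pos_iff_exists_adj v).2 ⟨u, hu⟩ |>.ne' hd
    have hlink : ∑ k ∈ range (2 * r), (-1 : ℤ) ^ k * ((G.degree v).choose k : ℤ) ≤ 1 := by
      rcases r with _ | r
      · simp
      · rw [hd, show 2 * (r + 1) = 2 * r + 1 + 1 by ring, Finset.sum_range_succ']
        simp
    omega
  · have hle := hv.card_connectedComponent_induce_compl_le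
    have hlink := sum_range_two_mul_neg_one_pow_mul_choose_nonpos hd r
    omega

end Counting

end SimpleGraph

theorem truncated_alternating_sum_le_card_components_general {V : Type*} [Fintype V]
    (G : SimpleGraph V) (hG : G.IsChordal) (r : ℕ) :
    ∑ I ∈ G.cliqueComplex.filter (fun I => I.card ≤ 2 * r), (-1 : ℤ) ^ (I.card - 1) ≤
      Nat.card G.ConnectedComponent :=
  hG.truncatedEulerChar_two_mul_le r

theorem truncated_alternating_sum_le_card_components {V : Type*} [Fintype V]
    (G : SimpleGraph V) (hG : G.IsChordal) (r : ℕ) (hr : 0 < r) :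
    ∑ I ∈ G.cliqueComplex.filter (fun I => I.card ≤ 2 * r), (-1 : ℤ) ^ (I.card - 1) ≤
      Nat.card G.ConnectedComponent :=
  truncated_alternating_sum_le_card_components_general G hG r
end

section
/- Let {A_v}_{v∈V} be a finite collection of events in a probability space, where the index set V is the vertex set of a tree G = (V,E) on n > 1 vertices. Then Pr(⋃_{v∈V} A_v) ≥ (1/(n−1)) · ( Σ_{v∈V} Pr(A_v) − Σ_{{v,w}∈E} Pr(A_v ∩ A_w) ). -/
open MeasureTheory Finset
open scoped Classical

/-!
A tree on `n ≥ 2` vertices has no isolated vertex, so `∑ᵥ Pr(Aᵥ) ≤ ∑ᵥ deg(v) Pr(Aᵥ)`, which by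
double counting equals `∑_{vw ∈ E} (Pr(Aᵥ) + Pr(A_w)) = ∑_{vw ∈ E} (Pr(Aᵥ ∪ A_w) + Pr(Aᵥ ∩ A_w))`.
Bounding each `Pr(Aᵥ ∪ A_w)` by `Pr(⋃ Aᵥ)` and using `|E| = n - 1` gives the inequality.
-/

namespace SimpleGraph

variable {V : Type*} [Fintype V] (G : SimpleGraph V) [DecidableRel G.Adj]

theorem sum_degree_smul_eq_sum_edgeFinset {M : Type*} [AddCommMonoid M] (f : V → M) :
    ∑ v, G.degree v • f v =
      ∑ e ∈ G.edgeFinset, Sym2.lift ⟨fun v w => f v + f w, fun _ _ => add_comm _ _⟩ e := by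
  classical
  calc ∑ v, G.degree v • f v = ∑ v, ∑ _e ∈ G.incidenceFinset v, f v := by
        simp only [sum_const, card_incidenceFinset_eq_degree]
    _ = ∑ e ∈ G.edgeFinset, ∑ v ∈ e.toFinset, f v :=
        sum_comm' fun v e => by simp [incidenceSet, and_comm]
    _ = _ := sum_congr rfl fun e he => by
        induction e with
        | h a b =>
          have hab : a ≠ b := by simpa using G.not_isDiag_of_mem_edgeFinset he
          rw [Sym2.toFinset_mk_eq, sum_pair hab, Sym2.lift_mk]

theorem sum_measureReal_sub_sum_edge_inter_le {Ω : Type*} [MeasurableSpace Ω] (μ : Measure Ω)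
    [IsFiniteMeasure μ] (hdeg : ∀ v, 0 < G.degree v) (A : V → Set Ω)
    (hA : ∀ v, MeasurableSet (A v)) :
    ∑ v, μ.real (A v) -
        ∑ e ∈ G.edgeFinset,
          Sym2.lift ⟨fun v w => μ.real (A v ∩ A w),
            fun _ _ => congrArg μ.real (Set.inter_comm _ _)⟩ e ≤
      #G.edgeFinset * μ.real (⋃ v, A v) := by
  have hedge : ∀ e ∈ G.edgeFinset,
      Sym2.lift ⟨fun v w => μ.real (A v) + μ.real (A w), fun _ _ => add_comm _ _⟩ e ≤
        μ.real (⋃ v, A v) +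
          Sym2.lift ⟨fun v w => μ.real (A v ∩ A w),
            fun _ _ => congrArg μ.real (Set.inter_comm _ _)⟩ e := by
    intro e _
    induction e with
    | h a b =>
      simp only [Sym2.lift_mk]
      rw [← measureReal_union_add_inter (hA b)]
      exact add_le_add_left
        (measureReal_mono (Set.union_subset (Set.subset_iUnion A a) (Set.subset_iUnion A b))) _
  have hsum := calc
    ∑ v, μ.real (A v) ≤ ∑ v, G.degree v • μ.real (A v) :=
      sum_le_sum fun v _ => le_smul_of_one_le_left measureReal_nonneg (hdeg v)
    _ = ∑ e ∈ G.edgeFinset,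
          Sym2.lift ⟨fun v w => μ.real (A v) + μ.real (A w), fun _ _ => add_comm _ _⟩ e :=
      G.sum_degree_smul_eq_sum_edgeFinset _
    _ ≤ _ := sum_le_sum hedge
  rw [sum_add_distrib, sum_const, nsmul_eq_mul] at hsum
  linarith

end SimpleGraph

theorem tree_lower_bound_card {Ω V : Type*} [MeasurableSpace Ω] [Fintype V]
    (μ : Measure Ω) [IsProbabilityMeasure μ] (G : SimpleGraph V) (hG : G.IsTree)
    (n : ℕ) (hn : Fintype.card V = n) (hn1 : 1 < n)
    (A : V → Set Ω) (hA : ∀ v, MeasurableSet (A v)) :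
    (μ (⋃ v, A v)).toReal ≥
      (1 / ((n : ℝ) - 1)) *
        (∑ v, (μ (A v)).toReal -
          ∑ e ∈ G.edgeFinset,
            Sym2.lift ⟨fun v w => (μ (A v ∩ A w)).toReal,
              fun v w => by simp [Set.inter_comm]⟩ e) := by
  have : Nontrivial V := Fintype.one_lt_card_iff_nontrivial.mp (hn ▸ hn1)
  have hcard : (#G.edgeFinset : ℝ) = n - 1 :=
    eq_sub_of_add_eq (by exact_mod_cast hn ▸ hG.card_edgeFinset)
  have key := G.sum_measureReal_sub_sum_edge_inter_le μ
    (fun v => hG.connected.preconnected.degree_pos_of_nontrivial v) A hA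
  rw [hcard] at key
  rw [ge_iff_le, one_div, inv_mul_le_iff₀ (sub_pos.mpr (by exact_mod_cast hn1))]
  exact key
end
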